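/- Let G and G' be Gauss diagrams on n strings related by a third Reidemeister move Ω3: three string fragments carry the six endpoints of three arrows joining the fragments pairwise, on each fragment the two endpoints are adjacent, the configuration is one arising from the oriented third Reidemeister move on tangle diagrams (sliding a strand across a crossing), and the move simultaneously transposes the two endpoints on each of the three fragments while preserving the directions and signs of the three arrows. Then Z_{I,j}(G) = Z_{I,j}(G') for every I ⊆ {1,…,n} and every j ∉ I. The terms of Z_{I,j} involving exactly two of the three arrows match up according to the five defining relations of diassociative algebras, the unmatched pairs cancelling because the corresponding tree diagrams have opposite signs. -/

import Mathlib

/-!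
Combinatorial Gauss diagrams on `n` strings and the tree invariants `Z I j`.

A Gauss diagram is encoded by a finite set of arrows; each arrow records the
string (an element of `Fin n`) and the position (a rational number, increasing
in the direction of the orientation of the string) of its tail and of its head,
together with a sign `±1`.  Only the induced combinatorial data (linear order of
the endpoints along each string, the tail/head pairing and the signs) is ever
used by the definitions below.

The tree invariant `Z I j G = ∑_{A ∈ 𝒜_{I,j}} sign(A) ⟨A, G⟩` is computed as a
signed count over all subsets `S` of the arrows of `G` that form a planar tree
diagram with leaves on `I` and trunk on `j`: each pair `(A, φ)` of a planar tree
diagram `A ∈ 𝒜_{I,j}` together with an embedding `φ : A → G` corresponds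
bijectively to the subset `S = Im φ` of the arrows of `G`, which is itself a
planar tree diagram with leaves on `I` and trunk on `j`; the contribution of the
pair to the sum is `sign(A) · sign(φ) = (-1)^{#right-pointing arrows of S} · ∏_{a ∈ S} sign(a)`.
-/

open scoped Classical

/-- An arrow of a Gauss diagram on `n` strings: a tail endpoint, a head
endpoint (each given by the string it lies on and its position along that
string) and a sign. -/
structure GArrow (n : ℕ) where
  tailStr : Fin n
  tailPos : ℚ
  headStr : Fin n
  headPos : ℚ
  sign : ℤ
deriving DecidableEq

namespace GArrow

/-- The two endpoints of an arrow: `false` is the tail, `true` is the head. -/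
def ep {n : ℕ} (a : GArrow n) : Bool → Fin n × ℚ
  | false => (a.tailStr, a.tailPos)
  | true => (a.headStr, a.headPos)

end GArrow

/-- A Gauss diagram on `n` strings: a finite set of signed arrows with all
endpoints pairwise distinct, and all signs equal to `±1`. -/
structure GaussDiagram (n : ℕ) where
  arrows : Finset (GArrow n)
  sign_pm : ∀ a ∈ arrows, a.sign = 1 ∨ a.sign = -1
  endpoints_distinct : ∀ a ∈ arrows, ∀ b ∈ arrows, ∀ s t : Bool,
    a.ep s = b.ep t → a = b ∧ s = t

/-- `S` is a tree diagram with leaves on `I` and trunk on `j`: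
* the head and the tail of every arrow lie on different strings;
* for each `i ∈ I` there is exactly one arrow tail on string `i`, and there are
  no arrow tails on strings outside `I`;
* every arrow head lies on a string of `I ∪ {j}`;
* on each string `i ∈ I` all arrow heads precede the unique arrow tail. -/
def IsTreeDiagram {n : ℕ} (I : Finset (Fin n)) (j : Fin n)
    (S : Finset (GArrow n)) : Prop :=
  (∀ a ∈ S, a.tailStr ≠ a.headStr) ∧
  (∀ i ∈ I, ∃! a, a ∈ S ∧ a.tailStr = i) ∧
  (∀ a ∈ S, a.tailStr ∈ I) ∧
  (∀ a ∈ S, a.headStr ∈ I ∨ a.headStr = j) ∧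
  (∀ a ∈ S, ∀ b ∈ S, a.headStr = b.tailStr → a.headPos < b.tailPos)

/-- `ParentRel S s t` : string `s` is the parent of string `t` in the rooted
tree determined by the tree diagram `S`, i.e. the (unique) arrow with tail on
`t` has its head on `s`. -/
def ParentRel {n : ℕ} (S : Finset (GArrow n)) (s t : Fin n) : Prop :=
  ∃ a ∈ S, a.tailStr = t ∧ a.headStr = s

/-- `Descends S s k` : string `k` belongs to the subtree of string `s` (it is
`s` itself or an iterated child of `s`). -/
def Descends {n : ℕ} (S : Finset (GArrow n)) : Fin n → Fin n → Prop :=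
  Relation.ReflTransGen (ParentRel S)

/-- `S` is a *planar* tree diagram with leaves on `I` and trunk on `j`: the
rooted tree `T_S` determined by `S` can be drawn in the plane so that the
clockwise order of its leaves, starting from the root on string `j`, is the
order of the string numbers.  Combinatorially this says that:
* the parent relation makes the strings carrying the arrows into a tree rooted
  at `j` (every leaf string is an iterated child of `j`);
* the whole subtree hanging from an arrow lies on the same side of the string
  carrying the head of that arrow as its tail does;
* two subtrees hanging on the same side of a common string are ordered, along
  that string, compatibly with the order of the strings: for two arrow heads on
  the same string, with both tails on the left, the subtree attached closer to
  the beginning of the string is the one carrying the larger string numbers,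
  while for two tails on the right it is the one carrying the smaller string
  numbers. -/
def IsPlanarTreeDiagram {n : ℕ} (I : Finset (Fin n)) (j : Fin n)
    (S : Finset (GArrow n)) : Prop :=
  IsTreeDiagram I j S ∧
  (∀ i ∈ I, Relation.TransGen (ParentRel S) j i) ∧
  (∀ a ∈ S, ∀ k : Fin n, Descends S a.tailStr k →
    (a.tailStr < a.headStr ↔ k < a.headStr)) ∧
  (∀ a ∈ S, ∀ b ∈ S, a.headStr = b.headStr → a.headPos < b.headPos →
    ∀ k k' : Fin n, Descends S a.tailStr k → Descends S b.tailStr k' →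
      ((a.tailStr < a.headStr → b.tailStr < b.headStr → k' < k) ∧
       (a.headStr < a.tailStr → b.headStr < b.tailStr → k < k')))

/-- The sign `(-1)^q` of an (embedded) arrow diagram, where `q` is the number
of right-pointing arrows (tail on a string of smaller number than the head). -/
noncomputable def treeSign {n : ℕ} (S : Finset (GArrow n)) : ℤ :=
  (-1) ^ (S.filter fun a => a.tailStr < a.headStr).card

/-- The tree invariant `Z_{I,j}(G) = ∑_{A ∈ 𝒜_{I,j}} sign(A)·⟨A,G⟩`, computed
as the signed count of embedded planar tree diagrams with leaves on `I` and
trunk on `j` inside `G`.  In particular `Z ∅ j G = 1` (only `S = ∅`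
contributes). -/
noncomputable def Z {n : ℕ} (I : Finset (Fin n)) (j : Fin n)
    (G : GaussDiagram n) : ℤ :=
  ∑ S ∈ G.arrows.powerset,
    if IsPlanarTreeDiagram I j S then treeSign S * ∏ a ∈ S, a.sign else 0

/-- The two points at positions `p` and `q` on string `str` are adjacent in the
Gauss diagram `G`: no arrow endpoint of `G` lies strictly between them. -/
def IsAdjacentPair {n : ℕ} (G : GaussDiagram n) (str : Fin n) (p q : ℚ) : Prop :=
  p ≠ q ∧ ∀ c ∈ G.arrows, ∀ s : Bool, (c.ep s).1 = str →
    ¬(min p q < (c.ep s).2 ∧ (c.ep s).2 < max p q)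

/-- The sign `±1` associated to a Boolean. -/
def bsign (b : Bool) : ℤ := if b then 1 else -1

/-- The arrow with endpoints `(s1, p1)` and `(s2, p2)` and sign `sg`, whose
tail is on `s1` if `d = true` and on `s2` if `d = false`. -/
def mkDirArrow {n : ℕ} (d : Bool) (s1 : Fin n) (p1 : ℚ) (s2 : Fin n) (p2 : ℚ)
    (sg : ℤ) : GArrow n :=
  if d then ⟨s1, p1, s2, p2, sg⟩ else ⟨s2, p2, s1, p1, sg⟩

/-- First Reidemeister move (deletion direction): `G'` is obtained from `G` by
deleting one arrow whose two endpoints are adjacent on a single string. -/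
def Omega1Del {n : ℕ} (G G' : GaussDiagram n) : Prop :=
  ∃ a ∈ G.arrows, a.tailStr = a.headStr ∧
    IsAdjacentPair G a.tailStr a.tailPos a.headPos ∧
    G'.arrows = G.arrows.erase a

/-- First Reidemeister move: insertion or deletion of an isolated arrow with
both (adjacent) endpoints on a single string. -/
def Omega1Rel {n : ℕ} (G G' : GaussDiagram n) : Prop :=
  Omega1Del G G' ∨ Omega1Del G' G

/-- Second Reidemeister move (deletion direction): `G'` is obtained from `G` by
deleting a pair of arrows of opposite signs joining the same two strings in the
same direction, whose tails are adjacent and whose heads are adjacent, the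
arrow whose tail comes first being the one whose head comes second. -/
def Omega2Del {n : ℕ} (G G' : GaussDiagram n) : Prop :=
  ∃ a ∈ G.arrows, ∃ b ∈ G.arrows, a ≠ b ∧
    a.tailStr = b.tailStr ∧ a.headStr = b.headStr ∧ a.sign = -b.sign ∧
    IsAdjacentPair G a.tailStr a.tailPos b.tailPos ∧
    IsAdjacentPair G a.headStr a.headPos b.headPos ∧
    ((a.tailPos < b.tailPos ∧ b.headPos < a.headPos) ∨
     (b.tailPos < a.tailPos ∧ a.headPos < b.headPos)) ∧
    G'.arrows = (G.arrows.erase a).erase b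

/-- Second Reidemeister move: insertion or deletion of such a pair of arrows. -/
def Omega2Rel {n : ℕ} (G G' : GaussDiagram n) : Prop :=
  Omega2Del G G' ∨ Omega2Del G' G

/-- Third Reidemeister move on Gauss diagrams: three string fragments (on the
strings `sX`, `sY`, `sZ`, not necessarily distinct) carry the six endpoints of
three arrows `a` (joining the first and second fragments), `b` (first and
third) and `c` (second and third); on each fragment the two endpoints are
adjacent, and the move simultaneously transposes the two endpoints on each
fragment, preserving the directions and the signs of the three arrows.

Exactly the configurations arising from the oriented third Reidemeister move on
tangle diagrams (sliding the first strand, which passes entirely over or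
entirely under the other two, across the crossing of the other two strands) are
allowed; they are parametrised by the five Booleans `u` (the sliding strand
passes over), `w` (the second strand passes over the third at their crossing)
and `ox`, `oy`, `oz` (the orientations of the three strands in the standard
local picture), which determine the directions, the signs and the mutual order
of the endpoints of the three arrows, as obtained by computing the writhes in
the local picture. -/
def Omega3Rel {n : ℕ} (G G' : GaussDiagram n) : Prop :=
  ∃ (sX sY sZ : Fin n) (xa xb ya yc zb zc : ℚ) (u w ox oy oz : Bool),
    mkDirArrow u sX xa sY ya (bsign u * bsign ox * bsign oy) ∈ G.arrows ∧
    mkDirArrow u sX xb sZ zb (-(bsign u * bsign ox * bsign oz)) ∈ G.arrows ∧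
    mkDirArrow w sY yc sZ zc (-(bsign w * bsign oy * bsign oz)) ∈ G.arrows ∧
    (if ox then xa < xb else xb < xa) ∧
    (if oy then ya < yc else yc < ya) ∧
    (if oz then zc < zb else zb < zc) ∧
    IsAdjacentPair G sX xa xb ∧ IsAdjacentPair G sY ya yc ∧
    IsAdjacentPair G sZ zb zc ∧
    G'.arrows =
      (((G.arrows.erase
            (mkDirArrow u sX xa sY ya (bsign u * bsign ox * bsign oy))).erase
            (mkDirArrow u sX xb sZ zb (-(bsign u * bsign ox * bsign oz)))).erase
            (mkDirArrow w sY yc sZ zc (-(bsign w * bsign oy * bsign oz)))) ∪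
        {mkDirArrow u sX xb sY yc (bsign u * bsign ox * bsign oy),
         mkDirArrow u sX xa sZ zc (-(bsign u * bsign ox * bsign oz)),
         mkDirArrow w sY ya sZ zb (-(bsign w * bsign oy * bsign oz))}

/-- A single Reidemeister move on Gauss diagrams. -/
def ReidMove {n : ℕ} (G G' : GaussDiagram n) : Prop :=
  Omega1Rel G G' ∨ Omega2Rel G G' ∨ Omega3Rel G G'
/-!
`Z I j G` is a signed count of the sets of arrows of `G` that are planar tree diagrams. After the
move is normalised so that its arrows are `a : P → Q`, `b : P → W`, `c : Q → W`, the arrows of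
`G` are `{a, b, c} ∪ T` and those of `G'` are `{a', b', c'} ∪ T`, and the count splits according
to which of `a, b, c` a set contains. A set containing only one of them keeps its planarity and
weight when that arrow is replaced by its primed version, because no arrow of `T` has an endpoint
between the two transposed ones. Sets containing `a` and `b` have two tails on `P` and do not
count. The remaining sets contain one of the chains `a, c` and `a', c'` or one of the forks
`b, c` and `b', c'`. One of the two chains is never planar, its arrow into `Q` ending after its
arrow out of `Q` starts; the other one, when planar, turns into exactly one planar fork, which it
cancels or matches according to signs; when neither chain is planar, the two forks match.
-/

section

variable {n : ℕ}

noncomputable def treeWeight (I : Finset (Fin n)) (j : Fin n) (S : Finset (GArrow n)) : ℤ :=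
  if IsPlanarTreeDiagram I j S then treeSign S * ∏ a ∈ S, a.sign else 0

theorem Z_eq_sum_treeWeight (I : Finset (Fin n)) (j : Fin n) (G : GaussDiagram n) :
    Z I j G = ∑ S ∈ G.arrows.powerset, treeWeight I j S :=
  rfl

def directionSign (a : GArrow n) : ℤ := if a.tailStr < a.headStr then -1 else 1

theorem treeSign_insert {S : Finset (GArrow n)} {x : GArrow n} (hx : x ∉ S) :
    treeSign (insert x S) = directionSign x * treeSign S := by
  unfold treeSign directionSign
  rw [Finset.filter_insert]
  split_ifs with h
  · rw [Finset.card_insert_of_notMem (fun hc => hx (Finset.mem_filter.1 hc).1), pow_succ]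
    ring
  · ring

theorem treeWeight_insert_insert {I : Finset (Fin n)} {j : Fin n} {R : Finset (GArrow n)}
    {x y : GArrow n} (hxy : x ≠ y) (hxR : x ∉ R) (hyR : y ∉ R)
    (hpl : IsPlanarTreeDiagram I j (insert x (insert y R))) :
    treeWeight I j (insert x (insert y R)) =
      directionSign x * x.sign * (directionSign y * y.sign) * (treeSign R * ∏ a ∈ R, a.sign) := by
  have hx : x ∉ insert y R := by simp [hxy, hxR]
  rw [treeWeight, if_pos hpl, treeSign_insert hx, treeSign_insert hyR, Finset.prod_insert hx,
    Finset.prod_insert hyR]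
  ring

theorem treeWeight_of_not_planar {I : Finset (Fin n)} {j : Fin n} {S : Finset (GArrow n)}
    (h : ¬ IsPlanarTreeDiagram I j S) : treeWeight I j S = 0 :=
  if_neg h

theorem treeWeight_eq_zero_of_tailStr_eq {I : Finset (Fin n)} {j : Fin n}
    {S : Finset (GArrow n)} {x y : GArrow n} (hx : x ∈ S) (hy : y ∈ S) (hxy : x ≠ y)
    (h : x.tailStr = y.tailStr) : treeWeight I j S = 0 := by
  refine treeWeight_of_not_planar ?_
  rintro ⟨⟨-, huniq, htail, -⟩, -⟩
  refine hxy ?_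
  obtain ⟨a, -, ha⟩ := huniq x.tailStr (htail x hx)
  exact (ha x ⟨hx, rfl⟩).trans (ha y ⟨hy, h.symm⟩).symm

section Tree

variable {I : Finset (Fin n)} {j : Fin n} {S R : Finset (GArrow n)}

theorem IsTreeDiagram.parentRel_unique (h : IsTreeDiagram I j S) {s s' t : Fin n}
    (h₁ : ParentRel S s t) (h₂ : ParentRel S s' t) : s = s' := by
  obtain ⟨a, ha, rfl, rfl⟩ := h₁
  obtain ⟨b, hb, hbt, rfl⟩ := h₂
  obtain ⟨c, -, hc⟩ := h.2.1 a.tailStr (h.2.2.1 a ha)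
  rw [(hc a ⟨ha, rfl⟩).trans (hc b ⟨hb, hbt⟩).symm]

theorem IsTreeDiagram.tailStr_ne {x y : GArrow n} (h : IsTreeDiagram I j (insert x (insert y R)))
    (hxR : x ∉ R) (hyR : y ∉ R) : ∀ r ∈ R, r.tailStr ≠ x.tailStr ∧ r.tailStr ≠ y.tailStr := by
  have key : ∀ z ∈ insert x (insert y R), z ∉ R → ∀ r ∈ R, r.tailStr ≠ z.tailStr := by
    intro z hz hzR r hr hrz
    obtain ⟨c, -, hc⟩ := h.2.1 z.tailStr (h.2.2.1 z hz)
    have : r = z := (hc r ⟨by simp [hr], hrz⟩).trans (hc z ⟨hz, rfl⟩).symm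
    exact hzR (this ▸ hr)
  exact fun r hr => ⟨key x (by simp) hxR r hr, key y (by simp) hyR r hr⟩

/-- The trunk `j` is not a tail string, so it has no parent; as parents are unique and every
tail string descends from `j`, the parent relation has no cycles. -/
theorem IsPlanarTreeDiagram.not_transGen_self (h : IsPlanarTreeDiagram I j S) (hj : j ∉ I)
    (t : Fin n) : ¬ Relation.TransGen (ParentRel S) t t := by
  have key : ∀ t, Relation.ReflTransGen (ParentRel S) j t →
      ¬ Relation.TransGen (ParentRel S) t t := by
    intro t ht
    induction ht with
    | refl =>
      intro hcyc
      obtain ⟨c, -, a, ha, hat, -⟩ := Relation.TransGen.tail'_iff.1 hcyc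
      exact hj (hat ▸ h.1.2.2.1 a ha)
    | tail _ hst ih =>
      intro hcyc
      obtain ⟨c, htc, hct⟩ := Relation.TransGen.tail'_iff.1 hcyc
      exact ih (Relation.TransGen.head' hst (IsTreeDiagram.parentRel_unique h.1 hct hst ▸ htc))
  intro hcyc
  obtain ⟨c, -, a, ha, hat, -⟩ := Relation.TransGen.tail'_iff.1 hcyc
  exact key t (h.2.1 t (hat ▸ h.1.2.2.1 a ha)).to_reflTransGen hcyc

theorem Descends.eq_or_exists_tailStr {t k : Fin n} (h : Descends R t k) :
    k = t ∨ ∃ r ∈ R, r.tailStr = k := by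
  rcases Relation.ReflTransGen.cases_tail h with h | ⟨c, -, r, hr, hrt, -⟩
  · exact Or.inl h
  · exact Or.inr ⟨r, hr, hrt⟩

theorem Descends.mono (hRS : R ⊆ S) {t k : Fin n} (h : Descends R t k) : Descends S t k :=
  Relation.ReflTransGen.mono (fun _ _ ⟨a, ha, h₁, h₂⟩ => ⟨a, hRS ha, h₁, h₂⟩) _ _ h

theorem Descends.eq_of_tailStr_ne {s t : Fin n} (hs : ∀ r ∈ R, r.tailStr ≠ s)
    (h : Descends R t s) : t = s := by
  rcases Descends.eq_or_exists_tailStr h with h | ⟨r, hr, hrt⟩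
  · exact h.symm
  · exact absurd hrt (hs r hr)

theorem Descends.total_of_parentRel_unique
    (huniq : ∀ {x y c : Fin n}, ParentRel R x c → ParentRel R y c → x = y)
    {s s' k : Fin n} (h₁ : Descends R s k) (h₂ : Descends R s' k) :
    Descends R s s' ∨ Descends R s' s := by
  induction h₁ with
  | refl => exact Or.inr h₂
  | tail h₁' hedge ih =>
    rcases Relation.ReflTransGen.cases_tail h₂ with rfl | ⟨c, hc, hce⟩
    · exact Or.inl (h₁'.tail hedge)
    · exact ih ((huniq hedge hce).symm ▸ hc)

end Tree

def AvoidsSegment (R : Finset (GArrow n)) (s : Fin n) (p q : ℚ) : Prop :=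
  ∀ r ∈ R, ∀ e : Bool, (r.ep e).1 = s →
    ((r.ep e).2 < p ∧ (r.ep e).2 < q) ∨ (p < (r.ep e).2 ∧ q < (r.ep e).2)

theorem lt_iff_lt_of_outside {x p q : ℚ} (h : (x < p ∧ x < q) ∨ (p < x ∧ q < x)) :
    (x < p ↔ x < q) ∧ (p < x ↔ q < x) := by
  rcases h with ⟨h₁, h₂⟩ | ⟨h₁, h₂⟩
  · exact ⟨iff_of_true h₁ h₂, iff_of_false (lt_asymm h₁) (lt_asymm h₂)⟩
  · exact ⟨iff_of_false (lt_asymm h₁) (lt_asymm h₂), iff_of_true h₁ h₂⟩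

theorem gt_iff_gt_of_lt_iff_lt {α : Type*} [LinearOrder α] {a b c d : α} (h : a < b ↔ c < d)
    (hab : a ≠ b) (hcd : c ≠ d) : b < a ↔ d < c :=
  ⟨fun hba => lt_of_le_of_ne (not_lt.1 fun hcd' => lt_asymm hba (h.2 hcd')) hcd.symm,
    fun hdc => lt_of_le_of_ne (not_lt.1 fun hab' => lt_asymm hdc (h.1 hab')) hab.symm⟩

namespace AvoidsSegment

variable {R R' : Finset (GArrow n)} {s : Fin n} {p q : ℚ}

theorem symm (h : AvoidsSegment R s p q) : AvoidsSegment R s q p :=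
  fun r hr e he => (h r hr e he).imp And.symm And.symm

theorem mono (h : AvoidsSegment R s p q) (hR : R' ⊆ R) : AvoidsSegment R' s p q :=
  fun r hr => h r (hR hr)

theorem tail (h : AvoidsSegment R s p q) {r : GArrow n} (hr : r ∈ R) (hs : r.tailStr = s) :
    (r.tailPos < p ∧ r.tailPos < q) ∨ (p < r.tailPos ∧ q < r.tailPos) :=
  h r hr false hs

theorem head (h : AvoidsSegment R s p q) {r : GArrow n} (hr : r ∈ R) (hs : r.headStr = s) :
    (r.headPos < p ∧ r.headPos < q) ∨ (p < r.headPos ∧ q < r.headPos) :=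
  h r hr true hs

theorem not_mem_of_tail (h : AvoidsSegment R s p q) {x : GArrow n} (hs : x.tailStr = s)
    (hp : x.tailPos = p) : x ∉ R := by
  intro hx
  rcases h.tail hx hs with ⟨h₁, -⟩ | ⟨h₁, -⟩ <;> exact (ne_of_lt h₁) (by rw [hp])

end AvoidsSegment

/-- The configuration left over by a tree diagram containing an arrow with tail on `P` and an
arrow from `Q` to `W`, once these two arrows are removed. -/
structure IsRemainder (R : Finset (GArrow n)) (P Q W : Fin n) : Prop where
  left_ne_right : P ≠ Q
  left_ne_root : P ≠ W
  right_ne_root : Q ≠ W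
  tailStr_ne : ∀ r ∈ R, r.tailStr ≠ P ∧ r.tailStr ≠ Q
  not_descends_left : ¬ Descends R P W
  not_descends_right : ¬ Descends R Q W
  parentRel_unique : ∀ {x y c : Fin n}, ParentRel R x c → ParentRel R y c → x = y

section Remainder

variable {I : Finset (Fin n)} {j : Fin n} {R : Finset (GArrow n)} {P Q W H : Fin n}
  {p q h w : ℚ} {s s' : ℤ}

/-- `H = Q` is a chain `P → Q → W`, `H = W` a fork `P → W ← Q`. -/
theorem IsRemainder.of_isPlanarTreeDiagram (hj : j ∉ I) (hH : H = Q ∨ H = W)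
    (hpl : IsPlanarTreeDiagram I j (insert ⟨P, p, H, h, s⟩ (insert ⟨Q, q, W, w, s'⟩ R)))
    (hx : (⟨P, p, H, h, s⟩ : GArrow n) ∉ insert ⟨Q, q, W, w, s'⟩ R)
    (hy : (⟨Q, q, W, w, s'⟩ : GArrow n) ∉ R) : IsRemainder R P Q W := by
  have hxR : (⟨P, p, H, h, s⟩ : GArrow n) ∉ R := fun hm => hx (Finset.mem_insert_of_mem hm)
  have hRS : R ⊆ insert ⟨P, p, H, h, s⟩ (insert ⟨Q, q, W, w, s'⟩ R) := fun r hr => by simp [hr]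
  have hWQ : ParentRel (insert ⟨P, p, H, h, s⟩ (insert ⟨Q, q, W, w, s'⟩ R)) W Q :=
    ⟨⟨Q, q, W, w, s'⟩, by simp, rfl, rfl⟩
  have hHP : ParentRel (insert ⟨P, p, H, h, s⟩ (insert ⟨Q, q, W, w, s'⟩ R)) H P :=
    ⟨⟨P, p, H, h, s⟩, by simp, rfl, rfl⟩
  have hWP : Relation.TransGen
      (ParentRel (insert ⟨P, p, H, h, s⟩ (insert ⟨Q, q, W, w, s'⟩ R))) W P := by
    rcases hH with rfl | rfl
    · exact .tail (.single hWQ) hHP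
    · exact .single hHP
  have hPQ : P ≠ Q := by
    rintro rfl
    obtain ⟨c, -, hc⟩ := hpl.1.2.1 P (hpl.1.2.2.1 ⟨P, p, H, h, s⟩ (by simp))
    have := (hc ⟨P, p, H, h, s⟩ ⟨by simp, rfl⟩).trans (hc ⟨P, q, W, w, s'⟩ ⟨by simp, rfl⟩).symm
    exact hx (this ▸ Finset.mem_insert_self _ _)
  refine ⟨hPQ, ?_, hpl.1.1 ⟨Q, q, W, w, s'⟩ (by simp), IsTreeDiagram.tailStr_ne hpl.1 hxR hy,
    ?_, ?_, ?_⟩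
  · rintro rfl
    exact IsPlanarTreeDiagram.not_transGen_self hpl hj P hWP
  · exact fun hd => IsPlanarTreeDiagram.not_transGen_self hpl hj P
      (Relation.TransGen.trans_right (Descends.mono hRS hd) hWP)
  · exact fun hd => IsPlanarTreeDiagram.not_transGen_self hpl hj Q
      (Relation.TransGen.trans_right (Descends.mono hRS hd) (.single hWQ))
  · rintro x y c ⟨a, ha, rfl, rfl⟩ ⟨b, hb, hbc, rfl⟩
    exact IsTreeDiagram.parentRel_unique hpl.1 ⟨a, hRS ha, rfl, rfl⟩ ⟨b, hRS hb, hbc, rfl⟩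

theorem parentRel_pair_iff {a b : Fin n} :
    ParentRel (insert ⟨P, p, H, h, s⟩ (insert ⟨Q, q, W, w, s'⟩ R)) a b ↔
      (a = H ∧ b = P) ∨ (a = W ∧ b = Q) ∨ ParentRel R a b := by
  constructor
  · rintro ⟨x, hx, rfl, rfl⟩
    simp only [Finset.mem_insert] at hx
    rcases hx with rfl | rfl | hx
    exacts [Or.inl ⟨rfl, rfl⟩, Or.inr (Or.inl ⟨rfl, rfl⟩), Or.inr (Or.inr ⟨x, hx, rfl, rfl⟩)]
  · rintro (⟨rfl, rfl⟩ | ⟨rfl, rfl⟩ | ⟨x, hx, rfl, rfl⟩)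
    · exact ⟨_, Finset.mem_insert_self _ _, rfl, rfl⟩
    · exact ⟨_, Finset.mem_insert_of_mem (Finset.mem_insert_self _ _), rfl, rfl⟩
    · exact ⟨x, by simp [hx], rfl, rfl⟩

namespace IsRemainder

variable (hR : IsRemainder R P Q W)
include hR

theorem eq_left_of_descends {t : Fin n} (h : Descends R t P) : t = P :=
  Descends.eq_of_tailStr_ne (fun r hr => (hR.tailStr_ne r hr).1) h

theorem eq_right_of_descends {t : Fin n} (h : Descends R t Q) : t = Q :=
  Descends.eq_of_tailStr_ne (fun r hr => (hR.tailStr_ne r hr).2) h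

theorem descends_iff (hH : H = Q ∨ H = W) {t k : Fin n} (htP : t ≠ P) (htQ : t ≠ Q) :
    Descends (insert ⟨P, p, H, h, s⟩ (insert ⟨Q, q, W, w, s'⟩ R)) t k ↔
      Descends R t k ∨ (Descends R t W ∧ (Descends R P k ∨ Descends R Q k)) := by
  have hRS : R ⊆ insert ⟨P, p, H, h, s⟩ (insert ⟨Q, q, W, w, s'⟩ R) := fun r hr => by simp [hr]
  constructor
  · intro hd
    induction hd with
    | refl => exact Or.inl .refl
    | @tail a k hta hak ih =>
      have hW : a = W → Descends R t W := by
        rintro rfl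
        exact ih.elim id And.left
      rcases parentRel_pair_iff.1 hak with ⟨rfl, rfl⟩ | ⟨rfl, rfl⟩ | hak
      · refine Or.inr ⟨?_, Or.inl .refl⟩
        rcases hH with rfl | rfl
        · rcases ih with ih | ⟨ih, -⟩
          · exact absurd (hR.eq_right_of_descends ih) htQ
          · exact ih
        · exact hW rfl
      · exact Or.inr ⟨hW rfl, Or.inr .refl⟩
      · rcases ih with ih | ⟨ih, ih' | ih'⟩
        · exact Or.inl (ih.tail hak)
        · exact Or.inr ⟨ih, Or.inl (ih'.tail hak)⟩
        · exact Or.inr ⟨ih, Or.inr (ih'.tail hak)⟩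
  · have hWQ : ParentRel (insert ⟨P, p, H, h, s⟩ (insert ⟨Q, q, W, w, s'⟩ R)) W Q :=
      parentRel_pair_iff.2 (Or.inr (Or.inl ⟨rfl, rfl⟩))
    have hWP : Descends (insert ⟨P, p, H, h, s⟩ (insert ⟨Q, q, W, w, s'⟩ R)) W P := by
      have hHP : ParentRel (insert ⟨P, p, H, h, s⟩ (insert ⟨Q, q, W, w, s'⟩ R)) H P :=
        parentRel_pair_iff.2 (Or.inl ⟨rfl, rfl⟩)
      rcases hH with rfl | rfl
      · exact .head hWQ (.single hHP)
      · exact .single hHP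
    rintro (hd | ⟨hd, hd' | hd'⟩)
    · exact Descends.mono hRS hd
    · exact ((Descends.mono hRS hd).trans hWP).trans (Descends.mono hRS hd')
    · exact ((Descends.mono hRS hd).tail hWQ).trans (Descends.mono hRS hd')

theorem descends_left_iff (hH : H = Q ∨ H = W) {k : Fin n} :
    Descends (insert ⟨P, p, H, h, s⟩ (insert ⟨Q, q, W, w, s'⟩ R)) P k ↔ Descends R P k := by
  refine ⟨fun hd => ?_, Descends.mono fun r hr => by simp [hr]⟩
  induction hd with
  | refl => exact .refl
  | tail _ hak ih =>
    rcases parentRel_pair_iff.1 hak with ⟨rfl, rfl⟩ | ⟨rfl, rfl⟩ | hak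
    · rcases hH with rfl | rfl
      · exact absurd (hR.eq_right_of_descends ih) hR.left_ne_right
      · exact absurd ih hR.not_descends_left
    · exact absurd ih hR.not_descends_left
    · exact ih.tail hak

theorem descends_right_iff_of_fork {k : Fin n} :
    Descends (insert ⟨P, p, W, h, s⟩ (insert ⟨Q, q, W, w, s'⟩ R)) Q k ↔ Descends R Q k := by
  refine ⟨fun hd => ?_, Descends.mono fun r hr => by simp [hr]⟩
  induction hd with
  | refl => exact .refl
  | tail _ hak ih =>
    rcases parentRel_pair_iff.1 hak with ⟨rfl, rfl⟩ | ⟨rfl, rfl⟩ | hak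
    · exact absurd ih hR.not_descends_right
    · exact absurd ih hR.not_descends_right
    · exact ih.tail hak

theorem descends_right_iff_of_chain {k : Fin n} :
    Descends (insert ⟨P, p, Q, h, s⟩ (insert ⟨Q, q, W, w, s'⟩ R)) Q k ↔
      Descends R Q k ∨ Descends R P k := by
  constructor
  · intro hd
    induction hd with
    | refl => exact Or.inl .refl
    | tail _ hak ih =>
      rcases parentRel_pair_iff.1 hak with ⟨-, rfl⟩ | ⟨rfl, rfl⟩ | hak
      · exact Or.inr .refl
      · exact absurd (ih.resolve_right hR.not_descends_left) hR.not_descends_right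
      · exact ih.imp (·.tail hak) (·.tail hak)
  · have hRS : R ⊆ insert ⟨P, p, Q, h, s⟩ (insert ⟨Q, q, W, w, s'⟩ R) := fun r hr => by simp [hr]
    rintro (hd | hd)
    · exact Descends.mono hRS hd
    · exact .head (parentRel_pair_iff.2 (Or.inl ⟨rfl, rfl⟩)) (Descends.mono hRS hd)

theorem not_descends_left_and_right {k : Fin n} (hP : Descends R P k) (hQ : Descends R Q k) :
    False := by
  rcases Descends.total_of_parentRel_unique hR.parentRel_unique hP hQ with hd | hd
  · exact hR.left_ne_right (hR.eq_right_of_descends hd)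
  · exact hR.left_ne_right (hR.eq_left_of_descends hd).symm

theorem descends_right_of_descends_chain {r : GArrow n} (hr : r ∈ R) (hrQ : r.headStr = Q)
    {k : Fin n} (hk : Descends (insert ⟨P, p, Q, h, s⟩ (insert ⟨Q, q, W, w, s'⟩ R)) r.tailStr k) :
    Descends R Q k := by
  have hQr : ParentRel R Q r.tailStr := ⟨r, hr, rfl, hrQ⟩
  rcases (hR.descends_iff (Or.inl rfl) (hR.tailStr_ne r hr).1 (hR.tailStr_ne r hr).2).1 hk
    with hrk | ⟨hrW, -⟩
  · exact .head hQr hrk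
  · exact absurd (.head hQr hrW) hR.not_descends_right

theorem descends_chain_iff_fork {p' q' v v' : ℚ} {sb st : ℤ} {t k : Fin n}
    (htP : t ≠ P) (htQ : t ≠ Q) :
    Descends (insert ⟨P, p, Q, h, s⟩ (insert ⟨Q, q, W, w, s'⟩ R)) t k ↔
      Descends (insert ⟨P, p', W, v, sb⟩ (insert ⟨Q, q', W, v', st⟩ R)) t k := by
  rw [hR.descends_iff (Or.inl rfl) htP htQ, hR.descends_iff (Or.inr rfl) htP htQ]

end IsRemainder

end Remainder

section ChainFork

variable {I : Finset (Fin n)} {j : Fin n} {R : Finset (GArrow n)} {P Q W : Fin n}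
  {p₁ p₂ q₁ q₂ w₁ w₂ : ℚ} {sb st sbt : ℤ}

theorem isTreeDiagram_of_replace_pair {x y x' y' : GArrow n}
    (h : IsTreeDiagram I j (insert x (insert y R)))
    (hR : ∀ r ∈ R, r.tailStr ≠ x.tailStr ∧ r.tailStr ≠ y.tailStr) (hxy : x.tailStr ≠ y.tailStr)
    (htx : x'.tailStr = x.tailStr) (hty : y'.tailStr = y.tailStr)
    (hx' : x'.tailStr ≠ x'.headStr) (hy' : y'.tailStr ≠ y'.headStr)
    (hhx : x'.headStr ∈ I ∨ x'.headStr = j) (hhy : y'.headStr ∈ I ∨ y'.headStr = j)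
    (horder : ∀ a ∈ insert x' (insert y' R), ∀ b ∈ insert x' (insert y' R),
      a.headStr = b.tailStr → a.headPos < b.tailPos) :
    IsTreeDiagram I j (insert x' (insert y' R)) := by
  obtain ⟨hloop, huniq, htail, hhead, -⟩ := h
  have hmem : ∀ {a : GArrow n} {S : Finset (GArrow n)}, a ∈ insert x' (insert y' S) →
      a = x' ∨ a = y' ∨ a ∈ S := by
    intro a S ha; simpa using ha
  refine ⟨?_, ?_, ?_, ?_, horder⟩
  · intro a ha
    rcases hmem ha with rfl | rfl | ha
    exacts [hx', hy', hloop a (by simp [ha])]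
  · intro i hi
    obtain ⟨a, ⟨ha, rfl⟩, hu⟩ := huniq i hi
    have hRa : ∀ r ∈ R, r.tailStr = a.tailStr → r = a := fun r hr hra => hu r ⟨by simp [hr], hra⟩
    rcases Finset.mem_insert.1 ha with rfl | ha
    · refine ⟨x', ⟨by simp, htx⟩, fun b ⟨hb, hbt⟩ => ?_⟩
      rcases hmem hb with rfl | rfl | hb
      exacts [rfl, absurd (hty.symm.trans hbt) hxy.symm, absurd hbt (hR b hb).1]
    rcases Finset.mem_insert.1 ha with rfl | ha
    · refine ⟨y', ⟨by simp, hty⟩, fun b ⟨hb, hbt⟩ => ?_⟩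
      rcases hmem hb with rfl | rfl | hb
      exacts [absurd (htx.symm.trans hbt) hxy, rfl, absurd hbt (hR b hb).2]
    · refine ⟨a, ⟨by simp [ha], rfl⟩, fun b ⟨hb, hbt⟩ => ?_⟩
      rcases hmem hb with rfl | rfl | hb
      · exact absurd (htx.symm.trans hbt).symm (hR a ha).1
      · exact absurd (hty.symm.trans hbt).symm (hR a ha).2
      · exact hRa b hb hbt
  · intro a ha
    rcases hmem ha with rfl | rfl | ha
    · exact htx ▸ htail x (by simp)
    · exact hty ▸ htail y (by simp)
    · exact htail a (by simp [ha])
  · intro a ha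
    rcases hmem ha with rfl | rfl | ha
    exacts [hhx, hhy, hhead a (by simp [ha])]

theorem headPos_lt_of_avoidsSegment {S : Finset (GArrow n)} {x : GArrow n} {s : Fin n}
    {p₁ p₂ : ℚ} (hS : IsTreeDiagram I j S) (hRS : R ⊆ S) (hav : AvoidsSegment R s p₁ p₂)
    (hx : x ∈ S) (hxs : x.tailStr = s) (hxp : x.tailPos = p₁ ∨ x.tailPos = p₂) :
    ∀ r ∈ R, r.headStr = s → r.headPos < p₁ ∧ r.headPos < p₂ := by
  intro r hr hrs
  have hlt : r.headPos < x.tailPos := hS.2.2.2.2 r (hRS hr) x hx (hrs.trans hxs.symm)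
  rcases hav.head hr hrs with h | ⟨h₁, h₂⟩
  · exact h
  · rcases hxp with hxp | hxp <;> rw [hxp] at hlt
    exacts [absurd hlt (lt_asymm h₁), absurd hlt (lt_asymm h₂)]

theorem lt_tailPos_of_avoidsSegment {S : Finset (GArrow n)} {x : GArrow n} {s : Fin n}
    {w₁ w₂ : ℚ} (hS : IsTreeDiagram I j S) (hRS : R ⊆ S) (hav : AvoidsSegment R s w₁ w₂)
    (hx : x ∈ S) (hxs : x.headStr = s) (hxw : x.headPos = w₁ ∨ x.headPos = w₂) :
    ∀ r ∈ R, r.tailStr = s → w₁ < r.tailPos ∧ w₂ < r.tailPos := by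
  intro r hr hrs
  have hlt : x.headPos < r.tailPos := hS.2.2.2.2 x hx r (hRS hr) (hxs.trans hrs.symm)
  rcases hav.tail hr hrs with ⟨h₁, h₂⟩ | h
  · rcases hxw with hxw | hxw <;> rw [hxw] at hlt
    exacts [absurd hlt (lt_asymm h₁), absurd hlt (lt_asymm h₂)]
  · exact h

theorem IsRemainder.of_chain (hj : j ∉ I) (hP : AvoidsSegment R P p₁ p₂)
    (hQ : AvoidsSegment R Q q₁ q₂)
    (hch : IsPlanarTreeDiagram I j (insert ⟨P, p₁, Q, q₁, sb⟩ (insert ⟨Q, q₂, W, w₁, st⟩ R))) :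
    IsRemainder R P Q W := by
  have hPQ : P ≠ Q := hch.1.1 ⟨P, p₁, Q, q₁, sb⟩ (by simp)
  refine IsRemainder.of_isPlanarTreeDiagram hj (Or.inl rfl) hch ?_
    (hQ.symm.not_mem_of_tail rfl rfl)
  simp only [Finset.mem_insert, not_or]
  exact ⟨fun h => hPQ (congrArg GArrow.tailStr h), hP.not_mem_of_tail rfl rfl⟩

theorem IsRemainder.of_fork (hj : j ∉ I) (hw : w₁ ≠ w₂) (hP : AvoidsSegment R P p₁ p₂)
    (hQ : AvoidsSegment R Q q₁ q₂) {p q v v' : ℚ} (hp : p = p₁ ∨ p = p₂) (hq : q = q₁ ∨ q = q₂)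
    (hv : (v = w₂ ∧ v' = w₁) ∨ (v = w₁ ∧ v' = w₂))
    (hfk : IsPlanarTreeDiagram I j (insert ⟨P, p, W, v, sbt⟩ (insert ⟨Q, q, W, v', st⟩ R))) :
    IsRemainder R P Q W := by
  have hvv' : v ≠ v' := by rcases hv with ⟨rfl, rfl⟩ | ⟨rfl, rfl⟩ <;> [exact hw.symm; exact hw]
  refine IsRemainder.of_isPlanarTreeDiagram hj (Or.inr rfl) hfk ?_ ?_
  · simp only [Finset.mem_insert, not_or]
    refine ⟨fun h => hvv' (congrArg GArrow.headPos h), ?_⟩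
    rcases hp with rfl | rfl
    exacts [hP.not_mem_of_tail rfl rfl, hP.symm.not_mem_of_tail rfl rfl]
  · rcases hq with rfl | rfl
    exacts [hQ.not_mem_of_tail rfl rfl, hQ.symm.not_mem_of_tail rfl rfl]

theorem lt_root_iff_of_chain
    (hch : IsPlanarTreeDiagram I j (insert ⟨P, p₁, Q, q₁, sb⟩ (insert ⟨Q, q₂, W, w₁, st⟩ R))) :
    P < W ↔ Q < W :=
  (hch.2.2.1 ⟨Q, q₂, W, w₁, st⟩ (by simp) P (.single ⟨⟨P, p₁, Q, q₁, sb⟩, by simp, rfl, rfl⟩)).symm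

theorem lt_iff_of_descends_of_chain (hj : j ∉ I) (hP : AvoidsSegment R P p₁ p₂)
    (hQ : AvoidsSegment R Q q₁ q₂)
    (hch : IsPlanarTreeDiagram I j (insert ⟨P, p₁, Q, q₁, sb⟩ (insert ⟨Q, q₂, W, w₁, st⟩ R)))
    {k k' : Fin n} (hk : Descends R P k) (hk' : Descends R Q k') : P < Q ↔ k < k' := by
  have hR := IsRemainder.of_chain hj hP hQ hch
  have hRS : R ⊆ insert ⟨P, p₁, Q, q₁, sb⟩ (insert ⟨Q, q₂, W, w₁, st⟩ R) :=
    fun r hr => by simp [hr]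
  have hkQ : P < Q ↔ k < Q :=
    hch.2.2.1 ⟨P, p₁, Q, q₁, sb⟩ (by simp) k ((hR.descends_left_iff (Or.inl rfl)).2 hk)
  have hkQ' : k ≠ Q := fun h =>
    hR.left_ne_right (hR.eq_right_of_descends (h ▸ hk))
  have main : (P < Q → k < k') ∧ (Q < P → k' < k) := by
    rcases Relation.ReflTransGen.cases_head hk' with rfl | ⟨c, ⟨r, hr, rfl, hrQ⟩, hck'⟩
    · exact ⟨hkQ.1, fun h => lt_of_le_of_ne (not_lt.1 fun h' => lt_asymm h (hkQ.2 h'))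
        hkQ'.symm⟩
    · have hrq : r.headPos < q₁ := (headPos_lt_of_avoidsSegment hch.1 hRS hQ
        (x := ⟨Q, q₂, W, w₁, st⟩) (by simp) rfl (Or.inr rfl) r hr hrQ).1
      have hb := hch.2.2.2 r (hRS hr) ⟨P, p₁, Q, q₁, sb⟩ (by simp) hrQ hrq k' k
        (Descends.mono hRS hck') ((hR.descends_left_iff (Or.inl rfl)).2 hk)
      have hrk' : r.tailStr < Q ↔ k' < Q := hrQ ▸ hch.2.2.1 r (hRS hr) k' (Descends.mono hRS hck')
      rw [hrQ] at hb
      rcases lt_or_gt_of_ne (hR.tailStr_ne r hr).2 with hc | hc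
      · exact ⟨hb.1 hc, fun h => lt_of_lt_of_le (hrk'.1 hc)
          (not_lt.1 fun h' => lt_asymm h (hkQ.2 h'))⟩
      · exact ⟨fun h => lt_of_lt_of_le (hkQ.1 h) (not_lt.1 fun h' => lt_asymm hc (hrk'.2 h')),
          hb.2 hc⟩
  refine ⟨main.1, fun h => ?_⟩
  rcases lt_or_gt_of_ne hR.left_ne_right with hPQ | hQP
  exacts [hPQ, absurd h (lt_asymm (main.2 hQP))]

theorem lt_iff_of_descends_of_fork (hj : j ∉ I) (hw : w₁ ≠ w₂) (hP : AvoidsSegment R P p₁ p₂)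
    (hQ : AvoidsSegment R Q q₁ q₂) (hE : P < W ↔ Q < W) {p q v v' : ℚ} (hp : p = p₁ ∨ p = p₂)
    (hq : q = q₁ ∨ q = q₂) (hv : (v = w₂ ∧ v' = w₁) ∨ (v = w₁ ∧ v' = w₂))
    (hfk : IsPlanarTreeDiagram I j (insert ⟨P, p, W, v, sbt⟩ (insert ⟨Q, q, W, v', st⟩ R)))
    {k k' : Fin n} (hk : Descends R P k) (hk' : Descends R Q k') : P < Q ↔ k < k' := by
  have hR := IsRemainder.of_fork hj hw hP hQ hp hq hv hfk
  have hvv' : v ≠ v' := by rcases hv with ⟨rfl, rfl⟩ | ⟨rfl, rfl⟩ <;> [exact hw.symm; exact hw]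
  have hE' : W < P ↔ W < Q := gt_iff_gt_of_lt_iff_lt hE hR.left_ne_root hR.right_ne_root
  have hdP : ∀ {k}, Descends R P k → Descends (insert ⟨P, p, W, v, sbt⟩
      (insert ⟨Q, q, W, v', st⟩ R)) P k := (hR.descends_left_iff (Or.inr rfl)).2
  have hdQ : ∀ {k}, Descends R Q k → Descends (insert ⟨P, p, W, v, sbt⟩
      (insert ⟨Q, q, W, v', st⟩ R)) Q k := hR.descends_right_iff_of_fork.2
  have hcmp := hfk.2.2.2 ⟨P, p, W, v, sbt⟩ (by simp) ⟨Q, q, W, v', st⟩ (by simp) rfl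
  have hcmp' := hfk.2.2.2 ⟨Q, q, W, v', st⟩ (by simp) ⟨P, p, W, v, sbt⟩ (by simp) rfl
  have horder : (∀ {k k'}, Descends R P k → Descends R Q k' → k < k') ∨
      (∀ {k k'}, Descends R P k → Descends R Q k' → k' < k) := by
    rcases lt_or_gt_of_ne hR.left_ne_root with hPW | hWP <;>
      rcases lt_or_gt_of_ne hvv' with hlt | hlt
    · exact Or.inr fun hk hk' => (hcmp hlt _ _ (hdP hk) (hdQ hk')).1 hPW (hE.1 hPW)
    · exact Or.inl fun hk hk' => (hcmp' hlt _ _ (hdQ hk') (hdP hk)).1 (hE.1 hPW) hPW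
    · exact Or.inl fun hk hk' => (hcmp hlt _ _ (hdP hk) (hdQ hk')).2 hWP (hE'.1 hWP)
    · exact Or.inr fun hk hk' => (hcmp' hlt _ _ (hdQ hk') (hdP hk)).2 (hE'.1 hWP) hWP
  rcases horder with h | h
  · exact iff_of_true (h .refl .refl) (h hk hk')
  · exact iff_of_false (lt_asymm (h .refl .refl)) (lt_asymm (h hk hk'))

theorem lt_iff_and_gt_iff_of_descends (hR : IsRemainder R P Q W)
    (hdir : ∀ {k k'}, Descends R P k → Descends R Q k' → (P < Q ↔ k < k')) {k k' : Fin n}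
    (hk : Descends R P k) (hk' : Descends R Q k') : (P < Q ↔ k < k') ∧ (Q < P ↔ k' < k) :=
  ⟨hdir hk hk', gt_iff_gt_of_lt_iff_lt (hdir hk hk') hR.left_ne_right
    fun h => hR.not_descends_left_and_right hk (h ▸ hk')⟩

/-- In the fork, the arrows from `P` and from `Q` play the role of the arrow from `Q` in the
chain. -/
theorem IsRemainder.forkArrow_spec (hR : IsRemainder R P Q W) (hE : P < W ↔ Q < W)
    {p q v v' : ℚ} (hv : (v = w₂ ∧ v' = w₁) ∨ (v = w₁ ∧ v' = w₂))
    {x : GArrow n} (hx : x ∈ insert ⟨P, p, W, v, sbt⟩ (insert ⟨Q, q, W, v', st⟩ R))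
    (hxR : x ∉ R) :
    x.headStr = W ∧ (x.headPos = w₁ ∨ x.headPos = w₂) ∧ (x.tailStr < W ↔ Q < W) ∧
      (W < x.tailStr ↔ W < Q) ∧ ∀ {k}, Descends (insert ⟨P, p, W, v, sbt⟩
        (insert ⟨Q, q, W, v', st⟩ R)) x.tailStr k →
        Descends (insert ⟨P, p₁, Q, q₁, sb⟩ (insert ⟨Q, q₂, W, w₁, st⟩ R)) Q k := by
  simp only [Finset.mem_insert, hxR, or_false] at hx
  rcases hx with rfl | rfl
  · refine ⟨rfl, by rcases hv with ⟨rfl, -⟩ | ⟨rfl, -⟩ <;> simp, hE,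
      gt_iff_gt_of_lt_iff_lt hE hR.left_ne_root hR.right_ne_root, fun hk => ?_⟩
    exact hR.descends_right_iff_of_chain.2 (Or.inr ((hR.descends_left_iff (Or.inr rfl)).1 hk))
  · refine ⟨rfl, by rcases hv with ⟨-, rfl⟩ | ⟨-, rfl⟩ <;> simp, Iff.rfl, Iff.rfl, fun hk => ?_⟩
    exact hR.descends_right_iff_of_chain.2 (Or.inl (hR.descends_right_iff_of_fork.1 hk))

theorem siblingOrder_fork_of_chain (hj : j ∉ I) (hP : AvoidsSegment R P p₁ p₂)
    (hQ : AvoidsSegment R Q q₁ q₂) (hW : AvoidsSegment R W w₁ w₂)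
    (hch : IsPlanarTreeDiagram I j (insert ⟨P, p₁, Q, q₁, sb⟩ (insert ⟨Q, q₂, W, w₁, st⟩ R)))
    {p q v v' : ℚ} (hv : (v = w₂ ∧ v' = w₁) ∨ (v = w₁ ∧ v' = w₂))
    (hsig : (P < Q ↔ P < W) ↔ v' < v) :
    ∀ a ∈ insert ⟨P, p, W, v, sbt⟩ (insert ⟨Q, q, W, v', st⟩ R),
    ∀ b ∈ insert ⟨P, p, W, v, sbt⟩ (insert ⟨Q, q, W, v', st⟩ R),
      a.headStr = b.headStr → a.headPos < b.headPos →
      ∀ k k' : Fin n, Descends (insert ⟨P, p, W, v, sbt⟩ (insert ⟨Q, q, W, v', st⟩ R)) a.tailStr k →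
        Descends (insert ⟨P, p, W, v, sbt⟩ (insert ⟨Q, q, W, v', st⟩ R)) b.tailStr k' →
        ((a.tailStr < a.headStr → b.tailStr < b.headStr → k' < k) ∧
          (a.headStr < a.tailStr → b.headStr < b.tailStr → k < k')) := by
  have hR := IsRemainder.of_chain hj hP hQ hch
  have hE := lt_root_iff_of_chain hch
  have hRC : R ⊆ insert ⟨P, p₁, Q, q₁, sb⟩ (insert ⟨Q, q₂, W, w₁, st⟩ R) :=
    fun r hr => by simp [hr]
  have hτ : (⟨Q, q₂, W, w₁, st⟩ : GArrow n) ∈ insert ⟨P, p₁, Q, q₁, sb⟩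
      (insert ⟨Q, q₂, W, w₁, st⟩ R) := by simp
  have hold : ∀ r ∈ R, ∀ {k}, Descends (insert ⟨P, p, W, v, sbt⟩
      (insert ⟨Q, q, W, v', st⟩ R)) r.tailStr k →
      Descends (insert ⟨P, p₁, Q, q₁, sb⟩ (insert ⟨Q, q₂, W, w₁, st⟩ R)) r.tailStr k :=
    fun r hr _ => (hR.descends_chain_iff_fork (hR.tailStr_ne r hr).1 (hR.tailStr_ne r hr).2).2
  intro a ha b hb hab habp k k' hk hk'
  by_cases haR : a ∈ R <;> by_cases hbR : b ∈ R
  · exact hch.2.2.2 a (hRC haR) b (hRC hbR) hab habp k k' (hold a haR hk) (hold b hbR hk')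
  · obtain ⟨hbW, hbw, hbE, hbE', hbk⟩ :=
      hR.forkArrow_spec (p₁ := p₁) (q₁ := q₁) (q₂ := q₂) (sb := sb) hE hv hb hbR
    have haw : a.headPos < w₁ := by
      rcases hW.head haR (hab.trans hbW) with h | ⟨h₁, h₂⟩
      · exact h.1
      · rcases hbw with e | e <;> rw [e] at habp
        exacts [absurd habp (lt_asymm h₁), absurd habp (lt_asymm h₂)]
    have := hch.2.2.2 a (hRC haR) _ hτ (hab.trans hbW) haw k k' (hold a haR hk) (hbk hk')
    rw [hab, hbW] at this
    rw [hab, hbW, hbE, hbE']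
    exact this
  · obtain ⟨haW, haw, haE, haE', hak⟩ :=
      hR.forkArrow_spec (p₁ := p₁) (q₁ := q₁) (q₂ := q₂) (sb := sb) hE hv ha haR
    have hbw : w₁ < b.headPos := by
      rcases hW.head hbR (hab.symm.trans haW) with ⟨h₁, h₂⟩ | h
      · rcases haw with e | e <;> rw [e] at habp
        exacts [absurd habp (lt_asymm h₁), absurd habp (lt_asymm h₂)]
      · exact h.1
    have := hch.2.2.2 _ hτ b (hRC hbR) (haW.symm.trans hab) hbw k k' (hak hk) (hold b hbR hk')
    rw [← hab, haW] at this
    rw [← hab, haW, haE, haE']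
    exact this
  · have hdir : ∀ {k k'}, Descends R P k → Descends R Q k' → (P < Q ↔ k < k') ∧ (Q < P ↔ k' < k) :=
      lt_iff_and_gt_iff_of_descends hR (lt_iff_of_descends_of_chain hj hP hQ hch)
    simp only [Finset.mem_insert, haR, hbR, or_false] at ha hb
    rcases ha with rfl | rfl <;> rcases hb with rfl | rfl
    · exact absurd habp (lt_irrefl _)
    · have hPk := (hR.descends_left_iff (Or.inr rfl)).1 hk
      have hQk' := hR.descends_right_iff_of_fork.1 hk'
      refine ⟨fun hPW _ => (hdir hPk hQk').2.1 ?_, fun hWP _ => (hdir hPk hQk').1.1 ?_⟩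
      · exact lt_of_le_of_ne (not_lt.1 fun h => lt_asymm habp (hsig.1 (iff_of_true h hPW)))
          hR.left_ne_right.symm
      · by_contra h
        exact lt_asymm habp (hsig.1 (iff_of_false h (lt_asymm hWP)))
    · have hQk := hR.descends_right_iff_of_fork.1 hk
      have hPk' := (hR.descends_left_iff (Or.inr rfl)).1 hk'
      refine ⟨fun _ hPW => (hdir hPk' hQk).1.1 ((hsig.2 habp).2 hPW), fun _ hWP => ?_⟩
      refine (hdir hPk' hQk).2.1 (lt_of_le_of_ne (not_lt.1 fun h => ?_) hR.left_ne_right.symm)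
      exact lt_asymm hWP ((hsig.2 habp).1 h)
    · exact absurd habp (lt_irrefl _)

theorem IsRemainder.transGen_root_chain_iff_fork (hR : IsRemainder R P Q W) (hj : j ∉ I)
    (hPI : P ∈ I) (hQI : Q ∈ I) {p p' q q' h v v' w : ℚ} {i : Fin n} (hi : i ∈ I) :
    Relation.TransGen (ParentRel (insert ⟨P, p, Q, h, sb⟩ (insert ⟨Q, q, W, w, st⟩ R))) j i ↔
      Relation.TransGen (ParentRel (insert ⟨P, p', W, v, sbt⟩ (insert ⟨Q, q', W, v', st⟩ R)))
        j i := by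
  have hij : i ≠ j := fun h => hj (h ▸ hi)
  have key : ∀ {r : Fin n → Fin n → Prop}, Relation.TransGen r j i ↔ Relation.ReflTransGen r j i :=
    by simp [Relation.reflTransGen_iff_eq_or_transGen, hij]
  rw [key, key]
  exact hR.descends_chain_iff_fork (fun h => hj (h ▸ hPI)) fun h => hj (h ▸ hQI)

theorem isTreeDiagram_fork_of_chain (hR : IsRemainder R P Q W) (hP : AvoidsSegment R P p₁ p₂)
    (hQ : AvoidsSegment R Q q₁ q₂) (hW : AvoidsSegment R W w₁ w₂)
    (hT : IsTreeDiagram I j (insert ⟨P, p₁, Q, q₁, sb⟩ (insert ⟨Q, q₂, W, w₁, st⟩ R)))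
    {p q v v' : ℚ} (hp : p = p₁ ∨ p = p₂) (hq : q = q₁ ∨ q = q₂)
    (hv : (v = w₂ ∧ v' = w₁) ∨ (v = w₁ ∧ v' = w₂)) :
    IsTreeDiagram I j (insert ⟨P, p, W, v, sbt⟩ (insert ⟨Q, q, W, v', st⟩ R)) := by
  have hRC : R ⊆ insert ⟨P, p₁, Q, q₁, sb⟩ (insert ⟨Q, q₂, W, w₁, st⟩ R) :=
    fun r hr => by simp [hr]
  have hβ : (⟨P, p₁, Q, q₁, sb⟩ : GArrow n) ∈ insert ⟨P, p₁, Q, q₁, sb⟩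
      (insert ⟨Q, q₂, W, w₁, st⟩ R) := by simp
  have hτ : (⟨Q, q₂, W, w₁, st⟩ : GArrow n) ∈ insert ⟨P, p₁, Q, q₁, sb⟩
      (insert ⟨Q, q₂, W, w₁, st⟩ R) := by simp
  have hWτ := lt_tailPos_of_avoidsSegment hT hRC hW hτ rfl (Or.inl rfl)
  refine isTreeDiagram_of_replace_pair hT hR.tailStr_ne hR.left_ne_right rfl rfl
    hR.left_ne_root hR.right_ne_root (hT.2.2.2.1 ⟨Q, q₂, W, w₁, st⟩ hτ)
    (hT.2.2.2.1 ⟨Q, q₂, W, w₁, st⟩ hτ) ?_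
  intro a ha b hb hab
  simp only [Finset.mem_insert] at ha hb
  rcases ha with rfl | rfl | ha <;> rcases hb with rfl | rfl | hb
  all_goals first
    | exact absurd hab hR.left_ne_root.symm
    | exact absurd hab hR.right_ne_root.symm
    | skip
  · rcases hv with ⟨rfl, -⟩ | ⟨rfl, -⟩
    exacts [(hWτ b hb hab.symm).2, (hWτ b hb hab.symm).1]
  · rcases hv with ⟨-, rfl⟩ | ⟨-, rfl⟩
    exacts [(hWτ b hb hab.symm).1, (hWτ b hb hab.symm).2]
  · have := headPos_lt_of_avoidsSegment hT hRC hP hβ rfl (Or.inl rfl) a ha hab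
    rcases hp with rfl | rfl
    exacts [this.1, this.2]
  · have := headPos_lt_of_avoidsSegment hT hRC hQ hτ rfl (Or.inr rfl) a ha hab
    rcases hq with rfl | rfl
    exacts [this.1, this.2]
  · exact hT.2.2.2.2 a (hRC ha) b (hRC hb) hab

theorem isPlanarTreeDiagram_fork_of_chain (hj : j ∉ I) (hP : AvoidsSegment R P p₁ p₂)
    (hQ : AvoidsSegment R Q q₁ q₂) (hW : AvoidsSegment R W w₁ w₂)
    (hch : IsPlanarTreeDiagram I j (insert ⟨P, p₁, Q, q₁, sb⟩ (insert ⟨Q, q₂, W, w₁, st⟩ R)))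
    {p q v v' : ℚ} (hp : p = p₁ ∨ p = p₂) (hq : q = q₁ ∨ q = q₂)
    (hv : (v = w₂ ∧ v' = w₁) ∨ (v = w₁ ∧ v' = w₂)) (hsig : (P < Q ↔ P < W) ↔ v' < v) :
    IsPlanarTreeDiagram I j (insert ⟨P, p, W, v, sbt⟩ (insert ⟨Q, q, W, v', st⟩ R)) := by
  have hR := IsRemainder.of_chain hj hP hQ hch
  have hE := lt_root_iff_of_chain hch
  have hτ : (⟨Q, q₂, W, w₁, st⟩ : GArrow n) ∈ insert ⟨P, p₁, Q, q₁, sb⟩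
      (insert ⟨Q, q₂, W, w₁, st⟩ R) := by simp
  have hPI : P ∈ I := hch.1.2.2.1 ⟨P, p₁, Q, q₁, sb⟩ (by simp)
  have hQI : Q ∈ I := hch.1.2.2.1 _ hτ
  refine ⟨isTreeDiagram_fork_of_chain hR hP hQ hW hch.1 hp hq hv,
    fun i hi => (hR.transGen_root_chain_iff_fork hj hPI hQI hi).1 (hch.2.1 i hi), ?_,
    siblingOrder_fork_of_chain hj hP hQ hW hch hv hsig⟩
  intro a ha k hk
  simp only [Finset.mem_insert] at ha
  rcases ha with rfl | rfl | ha
  · exact hE.trans (hch.2.2.1 _ hτ k (hR.descends_right_iff_of_chain.2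
      (Or.inr ((hR.descends_left_iff (Or.inr rfl)).1 hk))))
  · exact hch.2.2.1 _ hτ k (hR.descends_right_iff_of_chain.2
      (Or.inl (hR.descends_right_iff_of_fork.1 hk)))
  · exact hch.2.2.1 a (by simp [ha]) k
      ((hR.descends_chain_iff_fork (hR.tailStr_ne a ha).1 (hR.tailStr_ne a ha).2).2 hk)

theorem siblingOrder_chain_of_fork (hj : j ∉ I) (hw : w₁ ≠ w₂) (hP : AvoidsSegment R P p₁ p₂)
    (hQ : AvoidsSegment R Q q₁ q₂) (hW : AvoidsSegment R W w₁ w₂) (hE : P < W ↔ Q < W)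
    {p q v v' : ℚ} (hp : p = p₁ ∨ p = p₂) (hq : q = q₁ ∨ q = q₂)
    (hv : (v = w₂ ∧ v' = w₁) ∨ (v = w₁ ∧ v' = w₂))
    (hfk : IsPlanarTreeDiagram I j (insert ⟨P, p, W, v, sbt⟩ (insert ⟨Q, q, W, v', st⟩ R))) :
    ∀ a ∈ insert ⟨P, p₁, Q, q₁, sb⟩ (insert ⟨Q, q₂, W, w₁, st⟩ R),
    ∀ b ∈ insert ⟨P, p₁, Q, q₁, sb⟩ (insert ⟨Q, q₂, W, w₁, st⟩ R),
      a.headStr = b.headStr → a.headPos < b.headPos →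
      ∀ k k' : Fin n, Descends (insert ⟨P, p₁, Q, q₁, sb⟩ (insert ⟨Q, q₂, W, w₁, st⟩ R))
          a.tailStr k →
        Descends (insert ⟨P, p₁, Q, q₁, sb⟩ (insert ⟨Q, q₂, W, w₁, st⟩ R)) b.tailStr k' →
        ((a.tailStr < a.headStr → b.tailStr < b.headStr → k' < k) ∧
          (a.headStr < a.tailStr → b.headStr < b.tailStr → k < k')) := by
  have hR := IsRemainder.of_fork hj hw hP hQ hp hq hv hfk
  have hE' := gt_iff_gt_of_lt_iff_lt hE hR.left_ne_root hR.right_ne_root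
  have hRF : R ⊆ insert ⟨P, p, W, v, sbt⟩ (insert ⟨Q, q, W, v', st⟩ R) :=
    fun r hr => by simp [hr]
  have hbv : (⟨P, p, W, v, sbt⟩ : GArrow n) ∈ insert ⟨P, p, W, v, sbt⟩
      (insert ⟨Q, q, W, v', st⟩ R) := by simp
  have htv : (⟨Q, q, W, v', st⟩ : GArrow n) ∈ insert ⟨P, p, W, v, sbt⟩
      (insert ⟨Q, q, W, v', st⟩ R) := by simp
  have hdir : ∀ {k k'}, Descends R P k → Descends R Q k' → (P < Q ↔ k < k') ∧ (Q < P ↔ k' < k) :=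
    lt_iff_and_gt_iff_of_descends hR
      (lt_iff_of_descends_of_fork hj hw hP hQ hE hp hq hv hfk)
  have hold : ∀ r ∈ R, ∀ {k}, Descends (insert ⟨P, p₁, Q, q₁, sb⟩
      (insert ⟨Q, q₂, W, w₁, st⟩ R)) r.tailStr k →
      Descends (insert ⟨P, p, W, v, sbt⟩ (insert ⟨Q, q, W, v', st⟩ R)) r.tailStr k :=
    fun r hr _ => (hR.descends_chain_iff_fork (hR.tailStr_ne r hr).1 (hR.tailStr_ne r hr).2).1
  have hRQ := headPos_lt_of_avoidsSegment hfk.1 hRF hQ htv rfl hq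
  have hvw : ∀ {x : ℚ}, (w₁ < x ∧ w₂ < x) → v < x ∧ v' < x := by
    intro x hx; rcases hv with ⟨rfl, rfl⟩ | ⟨rfl, rfl⟩ <;> simp [hx]
  have hwv : ∀ {x : ℚ}, (x < w₁ ∧ x < w₂) → x < v ∧ x < v' := by
    intro x hx; rcases hv with ⟨rfl, rfl⟩ | ⟨rfl, rfl⟩ <;> simp [hx]
  intro a ha b hb hab habp k k' hk hk'
  simp only [Finset.mem_insert] at ha hb
  rcases ha with rfl | rfl | ha <;> rcases hb with rfl | rfl | hb
  all_goals first
    | exact absurd habp (lt_irrefl _)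
    | exact absurd hab hR.right_ne_root
    | exact absurd hab hR.right_ne_root.symm
    | skip
  · exact absurd habp (lt_asymm (hRQ b hb hab.symm).1)
  · have hbw := hvw ((hW.head hb hab.symm).resolve_left fun h => lt_asymm habp h.1)
    rcases hR.descends_right_iff_of_chain.1 hk with hQk | hPk
    · exact hfk.2.2.2 _ htv b (hRF hb) hab hbw.2 k k' (hR.descends_right_iff_of_fork.2 hQk)
        (hold b hb hk')
    · have := hfk.2.2.2 _ hbv b (hRF hb) hab hbw.1 k k'
        ((hR.descends_left_iff (Or.inr rfl)).2 hPk) (hold b hb hk')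
      exact ⟨fun h₁ h₂ => this.1 (hE.2 h₁) h₂, fun h₁ h₂ => this.2 (hE'.2 h₁) h₂⟩
  · have hPk' := (hR.descends_left_iff (Or.inl rfl)).1 hk'
    have hQk := hR.descends_right_of_descends_chain ha hab hk
    rw [hab]
    exact ⟨fun _ h => (hdir hPk' hQk).1.1 h, fun _ h => (hdir hPk' hQk).2.1 h⟩
  · have haw := hwv ((hW.head ha hab).resolve_right fun h => lt_asymm habp h.1)
    rcases hR.descends_right_iff_of_chain.1 hk' with hQk | hPk
    · exact hfk.2.2.2 a (hRF ha) _ htv hab haw.2 k k' (hold a ha hk)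
        (hR.descends_right_iff_of_fork.2 hQk)
    · have := hfk.2.2.2 a (hRF ha) _ hbv hab haw.1 k k' (hold a ha hk)
        ((hR.descends_left_iff (Or.inr rfl)).2 hPk)
      exact ⟨fun h₁ h₂ => this.1 h₁ (hE.2 h₂), fun h₁ h₂ => this.2 h₁ (hE'.2 h₂)⟩
  · exact hfk.2.2.2 a (hRF ha) b (hRF hb) hab habp k k' (hold a ha hk) (hold b hb hk')

theorem isTreeDiagram_chain_of_fork (hR : IsRemainder R P Q W) (hq₁₂ : q₁ < q₂)
    (hP : AvoidsSegment R P p₁ p₂) (hQ : AvoidsSegment R Q q₁ q₂) (hW : AvoidsSegment R W w₁ w₂)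
    {p q v v' : ℚ} (hp : p = p₁ ∨ p = p₂) (hq : q = q₁ ∨ q = q₂)
    (hv : (v = w₂ ∧ v' = w₁) ∨ (v = w₁ ∧ v' = w₂))
    (hT : IsTreeDiagram I j (insert ⟨P, p, W, v, sbt⟩ (insert ⟨Q, q, W, v', st⟩ R))) :
    IsTreeDiagram I j (insert ⟨P, p₁, Q, q₁, sb⟩ (insert ⟨Q, q₂, W, w₁, st⟩ R)) := by
  have hRF : R ⊆ insert ⟨P, p, W, v, sbt⟩ (insert ⟨Q, q, W, v', st⟩ R) :=
    fun r hr => by simp [hr]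
  have hbv : (⟨P, p, W, v, sbt⟩ : GArrow n) ∈ insert ⟨P, p, W, v, sbt⟩
      (insert ⟨Q, q, W, v', st⟩ R) := by simp
  have htv : (⟨Q, q, W, v', st⟩ : GArrow n) ∈ insert ⟨P, p, W, v, sbt⟩
      (insert ⟨Q, q, W, v', st⟩ R) := by simp
  refine isTreeDiagram_of_replace_pair hT hR.tailStr_ne hR.left_ne_right rfl rfl
    hR.left_ne_right hR.right_ne_root (Or.inl (hT.2.2.1 _ htv))
    (hT.2.2.2.1 ⟨Q, q, W, v', st⟩ htv) ?_
  intro a ha b hb hab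
  simp only [Finset.mem_insert] at ha hb
  rcases ha with rfl | rfl | ha <;> rcases hb with rfl | rfl | hb
  all_goals first
    | exact absurd hab hR.left_ne_right.symm
    | exact absurd hab hR.left_ne_root.symm
    | exact absurd hab hR.right_ne_root.symm
    | skip
  · exact hq₁₂
  · exact absurd hab.symm (hR.tailStr_ne b hb).2
  · have := lt_tailPos_of_avoidsSegment hT hRF hW htv rfl
      (by rcases hv with ⟨-, rfl⟩ | ⟨-, rfl⟩ <;> simp) b hb hab.symm
    exact this.1
  · exact (headPos_lt_of_avoidsSegment hT hRF hP hbv rfl hp a ha hab).1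
  · exact (headPos_lt_of_avoidsSegment hT hRF hQ htv rfl hq a ha hab).2
  · exact hT.2.2.2.2 a (hRF ha) b (hRF hb) hab

theorem isPlanarTreeDiagram_chain_of_fork (hj : j ∉ I) (hw : w₁ ≠ w₂) (hq₁₂ : q₁ < q₂)
    (hP : AvoidsSegment R P p₁ p₂) (hQ : AvoidsSegment R Q q₁ q₂) (hW : AvoidsSegment R W w₁ w₂)
    (hE : P < W ↔ Q < W) {p q v v' : ℚ} (hp : p = p₁ ∨ p = p₂) (hq : q = q₁ ∨ q = q₂)
    (hv : (v = w₂ ∧ v' = w₁) ∨ (v = w₁ ∧ v' = w₂))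
    (hfk : IsPlanarTreeDiagram I j (insert ⟨P, p, W, v, sbt⟩ (insert ⟨Q, q, W, v', st⟩ R))) :
    IsPlanarTreeDiagram I j (insert ⟨P, p₁, Q, q₁, sb⟩ (insert ⟨Q, q₂, W, w₁, st⟩ R)) := by
  have hR := IsRemainder.of_fork hj hw hP hQ hp hq hv hfk
  have hbv : (⟨P, p, W, v, sbt⟩ : GArrow n) ∈ insert ⟨P, p, W, v, sbt⟩
      (insert ⟨Q, q, W, v', st⟩ R) := by simp
  have htv : (⟨Q, q, W, v', st⟩ : GArrow n) ∈ insert ⟨P, p, W, v, sbt⟩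
      (insert ⟨Q, q, W, v', st⟩ R) := by simp
  have hdir : ∀ {k k'}, Descends R P k → Descends R Q k' → (P < Q ↔ k < k') :=
    lt_iff_of_descends_of_fork hj hw hP hQ hE hp hq hv hfk
  have hPI : P ∈ I := hfk.1.2.2.1 _ hbv
  have hQI : Q ∈ I := hfk.1.2.2.1 _ htv
  refine ⟨isTreeDiagram_chain_of_fork hR hq₁₂ hP hQ hW hp hq hv hfk.1,
    fun i hi => (hR.transGen_root_chain_iff_fork hj hPI hQI hi).2 (hfk.2.1 i hi), ?_,
    siblingOrder_chain_of_fork hj hw hP hQ hW hE hp hq hv hfk⟩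
  intro a ha k hk
  simp only [Finset.mem_insert] at ha
  rcases ha with rfl | rfl | ha
  · exact hdir ((hR.descends_left_iff (Or.inl rfl)).1 hk) .refl
  · rcases hR.descends_right_iff_of_chain.1 hk with hQk | hPk
    · exact hfk.2.2.1 _ htv k (hR.descends_right_iff_of_fork.2 hQk)
    · exact hE.symm.trans (hfk.2.2.1 _ hbv k ((hR.descends_left_iff (Or.inr rfl)).2 hPk))
  · exact hfk.2.2.1 a (by simp [ha]) k
      ((hR.descends_chain_iff_fork (hR.tailStr_ne a ha).1 (hR.tailStr_ne a ha).2).1 hk)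

end ChainFork

section Moves

variable {I : Finset (Fin n)} {j : Fin n} {S R : Finset (GArrow n)} {P Q W : Fin n} {st sbt : ℤ}

section Image

variable {f : GArrow n → GArrow n} (htail : ∀ x ∈ S, (f x).tailStr = x.tailStr)
  (hhead : ∀ x ∈ S, (f x).headStr = x.headStr)
include htail hhead

theorem parentRel_image_iff {s t : Fin n} : ParentRel (S.image f) s t ↔ ParentRel S s t := by
  constructor
  · rintro ⟨a, ha, rfl, rfl⟩
    obtain ⟨x, hx, rfl⟩ := Finset.mem_image.1 ha
    exact ⟨x, hx, (htail x hx).symm, (hhead x hx).symm⟩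
  · rintro ⟨x, hx, rfl, rfl⟩
    exact ⟨f x, Finset.mem_image_of_mem f hx, htail x hx, hhead x hx⟩

theorem isTreeDiagram_image (h : IsTreeDiagram I j S)
    (hht : ∀ x ∈ S, ∀ y ∈ S, x ≠ y → x.headStr = y.tailStr →
      ((f x).headPos < (f y).tailPos ↔ x.headPos < y.tailPos)) :
    IsTreeDiagram I j (S.image f) := by
  have hmem : ∀ a ∈ S.image f, ∃ x ∈ S, f x = a := fun a ha => by simpa using ha
  obtain ⟨hloop, huniq, htl, hhd, hord⟩ := h
  refine ⟨?_, ?_, ?_, ?_, ?_⟩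
  · intro a ha
    obtain ⟨x, hx, rfl⟩ := hmem a ha
    rw [htail x hx, hhead x hx]; exact hloop x hx
  · intro i hi
    obtain ⟨x, ⟨hx, rfl⟩, hux⟩ := huniq i hi
    refine ⟨f x, ⟨Finset.mem_image_of_mem f hx, htail x hx⟩, ?_⟩
    rintro a ⟨ha, hat⟩
    obtain ⟨z, hz, rfl⟩ := hmem a ha
    rw [hux z ⟨hz, (htail z hz) ▸ hat⟩]
  · intro a ha
    obtain ⟨x, hx, rfl⟩ := hmem a ha
    rw [htail x hx]; exact htl x hx
  · intro a ha
    obtain ⟨x, hx, rfl⟩ := hmem a ha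
    rw [hhead x hx]; exact hhd x hx
  · intro a ha b hb hab
    obtain ⟨x, hx, rfl⟩ := hmem a ha
    obtain ⟨z, hz, rfl⟩ := hmem b hb
    rw [hhead x hx, htail z hz] at hab
    have hxz : x ≠ z := by rintro rfl; exact hloop x hx hab.symm
    exact (hht x hx z hz hxz hab).2 (hord x hx z hz hab)

theorem isPlanarTreeDiagram_image (h : IsPlanarTreeDiagram I j S)
    (hht : ∀ x ∈ S, ∀ y ∈ S, x ≠ y → x.headStr = y.tailStr →
      ((f x).headPos < (f y).tailPos ↔ x.headPos < y.tailPos))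
    (hhh : ∀ x ∈ S, ∀ y ∈ S, x ≠ y → x.headStr = y.headStr →
      (x.tailStr < x.headStr ↔ y.tailStr < y.headStr) →
      ((f x).headPos < (f y).headPos ↔ x.headPos < y.headPos)) :
    IsPlanarTreeDiagram I j (S.image f) := by
  have hmem : ∀ a ∈ S.image f, ∃ x ∈ S, f x = a := fun a ha => by simpa using ha
  have hpar : ParentRel (S.image f) = ParentRel S :=
    funext₂ fun _ _ => propext (parentRel_image_iff htail hhead)
  obtain ⟨hT, hroot, hside, hsib⟩ := h
  refine ⟨isTreeDiagram_image htail hhead hT hht, by simpa only [hpar] using hroot, ?_, ?_⟩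
  · intro a ha k hk
    obtain ⟨x, hx, rfl⟩ := hmem a ha
    rw [htail x hx, Descends, hpar] at hk
    rw [htail x hx, hhead x hx]
    exact hside x hx k hk
  · intro a ha b hb hab habp k k' hk hk'
    obtain ⟨x, hx, rfl⟩ := hmem a ha
    obtain ⟨z, hz, rfl⟩ := hmem b hb
    rw [htail x hx, Descends, hpar] at hk
    rw [htail z hz, Descends, hpar] at hk'
    rw [hhead x hx, hhead z hz] at hab
    rw [htail x hx, hhead x hx, htail z hz, hhead z hz]
    have hxz : x ≠ z := by rintro rfl; exact lt_irrefl _ habp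
    refine ⟨fun h₁ h₂ => ?_, fun h₁ h₂ => ?_⟩
    · exact (hsib x hx z hz hab ((hhh x hx z hz hxz hab (iff_of_true h₁ h₂)).1 habp)
        k k' hk hk').1 h₁ h₂
    · exact (hsib x hx z hz hab ((hhh x hx z hz hxz hab
        (iff_of_false (lt_asymm h₁) (lt_asymm h₂))).1 habp) k k' hk hk').2 h₁ h₂

end Image

theorem isPlanarTreeDiagram_insert_of_avoidsSegment {δ δ' : GArrow n}
    (hts : δ'.tailStr = δ.tailStr) (hhs : δ'.headStr = δ.headStr)
    (hT : AvoidsSegment R δ.tailStr δ.tailPos δ'.tailPos)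
    (hH : AvoidsSegment R δ.headStr δ.headPos δ'.headPos) (hδ : δ ∉ R)
    (h : IsPlanarTreeDiagram I j (insert δ R)) : IsPlanarTreeDiagram I j (insert δ' R) := by
  set f : GArrow n → GArrow n := fun a => if a = δ then δ' else a with hf
  have hfR : ∀ r ∈ R, f r = r := fun r hr => if_neg (by rintro rfl; exact hδ hr)
  have hfδ : f δ = δ' := if_pos rfl
  have himg : (insert δ R).image f = insert δ' R := by
    rw [Finset.image_insert, hfδ, Finset.image_congr (g := id) hfR, Finset.image_id]
  rw [← himg]
  have hmem : ∀ {x y}, x ∈ insert δ R → y ∈ insert δ R → x ≠ y →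
      (x = δ ∧ y ∈ R) ∨ (x ∈ R ∧ y = δ) ∨ (x ∈ R ∧ y ∈ R) := by
    intro x y hx hy hxy
    simp only [Finset.mem_insert] at hx hy
    rcases hx with rfl | hx <;> rcases hy with rfl | hy
    exacts [absurd rfl hxy, Or.inl ⟨rfl, hy⟩, Or.inr (Or.inl ⟨hx, rfl⟩), Or.inr (Or.inr ⟨hx, hy⟩)]
  refine isPlanarTreeDiagram_image ?_ ?_ h ?_ ?_
  · intro x _; by_cases hx : x = δ <;> simp [hf, hx, hts]
  · intro x _; by_cases hx : x = δ <;> simp [hf, hx, hhs]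
  · intro x hx y hy hxy hxy'
    rcases hmem hx hy hxy with ⟨rfl, hyR⟩ | ⟨hxR, rfl⟩ | ⟨hxR, hyR⟩
    · rw [hfR y hyR, hfδ]
      exact (lt_iff_lt_of_outside (hH.tail hyR hxy'.symm)).2.symm
    · rw [hfR x hxR, hfδ]
      exact (lt_iff_lt_of_outside (hT.head hxR hxy')).1.symm
    · rw [hfR x hxR, hfR y hyR]
  · intro x hx y hy hxy hxy' _
    rcases hmem hx hy hxy with ⟨rfl, hyR⟩ | ⟨hxR, rfl⟩ | ⟨hxR, hyR⟩
    · rw [hfR y hyR, hfδ]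
      exact (lt_iff_lt_of_outside (hH.head hyR hxy'.symm)).2.symm
    · rw [hfR x hxR, hfδ]
      exact (lt_iff_lt_of_outside (hH.head hxR hxy')).1.symm
    · rw [hfR x hxR, hfR y hyR]

theorem treeWeight_insert_eq_of_avoidsSegment {δ δ' : GArrow n}
    (hts : δ'.tailStr = δ.tailStr) (hhs : δ'.headStr = δ.headStr) (hsg : δ'.sign = δ.sign)
    (hT : AvoidsSegment R δ.tailStr δ.tailPos δ'.tailPos)
    (hH : AvoidsSegment R δ.headStr δ.headPos δ'.headPos) (hδ : δ ∉ R) (hδ' : δ' ∉ R) :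
    treeWeight I j (insert δ R) = treeWeight I j (insert δ' R) := by
  have hiff : IsPlanarTreeDiagram I j (insert δ R) ↔ IsPlanarTreeDiagram I j (insert δ' R) :=
    ⟨isPlanarTreeDiagram_insert_of_avoidsSegment hts hhs hT hH hδ,
      isPlanarTreeDiagram_insert_of_avoidsSegment hts.symm hhs.symm (hts ▸ hT.symm)
        (hhs ▸ hH.symm) hδ'⟩
  have hps : directionSign δ' = directionSign δ := by rw [directionSign, directionSign, hts, hhs]
  unfold treeWeight
  rw [hiff.eq, treeSign_insert hδ, treeSign_insert hδ', Finset.prod_insert hδ,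
    Finset.prod_insert hδ', hps, hsg]

/-- When `P` and `Q` lie on different sides of `W`, the planarity conditions never compare the
two arrows of the fork, so their heads on `W` may be exchanged. -/
theorem isPlanarTreeDiagram_fork_swap {p₁ p₂ q₁ q₂ w₁ w₂ : ℚ} (hw : w₁ ≠ w₂)
    (hP : AvoidsSegment R P p₁ p₂) (hQ : AvoidsSegment R Q q₁ q₂) (hW : AvoidsSegment R W w₁ w₂)
    (hE : ¬ (P < W ↔ Q < W))
    (h : IsPlanarTreeDiagram I j (insert ⟨P, p₁, W, w₁, sbt⟩ (insert ⟨Q, q₁, W, w₂, st⟩ R))) :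
    IsPlanarTreeDiagram I j (insert ⟨P, p₂, W, w₂, sbt⟩ (insert ⟨Q, q₂, W, w₁, st⟩ R)) := by
  have hbR : (⟨P, p₁, W, w₁, sbt⟩ : GArrow n) ∉ R := hP.not_mem_of_tail rfl rfl
  have htR : (⟨Q, q₁, W, w₂, st⟩ : GArrow n) ∉ R := hQ.not_mem_of_tail rfl rfl
  have hbt : (⟨Q, q₁, W, w₂, st⟩ : GArrow n) ≠ ⟨P, p₁, W, w₁, sbt⟩ :=
    fun h => hw (congrArg GArrow.headPos h).symm
  have hPW : P ≠ W := h.1.1 ⟨P, p₁, W, w₁, sbt⟩ (by simp)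
  have hQW : Q ≠ W := h.1.1 ⟨Q, q₁, W, w₂, st⟩ (by simp)
  set f : GArrow n → GArrow n := fun a =>
    if a = ⟨P, p₁, W, w₁, sbt⟩ then ⟨P, p₂, W, w₂, sbt⟩
    else if a = ⟨Q, q₁, W, w₂, st⟩ then ⟨Q, q₂, W, w₁, st⟩ else a with hf
  have hfb : f ⟨P, p₁, W, w₁, sbt⟩ = ⟨P, p₂, W, w₂, sbt⟩ := if_pos rfl
  have hft : f ⟨Q, q₁, W, w₂, st⟩ = ⟨Q, q₂, W, w₁, st⟩ := by simp [hf, hbt]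
  have hfR : ∀ r ∈ R, f r = r := fun r hr =>
    (if_neg (by rintro rfl; exact hbR hr)).trans (if_neg (by rintro rfl; exact htR hr))
  have himg : (insert ⟨P, p₁, W, w₁, sbt⟩ (insert ⟨Q, q₁, W, w₂, st⟩ R)).image f =
      insert ⟨P, p₂, W, w₂, sbt⟩ (insert ⟨Q, q₂, W, w₁, st⟩ R) := by
    rw [Finset.image_insert, Finset.image_insert, hfb, hft, Finset.image_congr (g := id) hfR,
      Finset.image_id]
  rw [← himg]
  refine isPlanarTreeDiagram_image ?_ ?_ h ?_ ?_
  · intro x hx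
    simp only [Finset.mem_insert] at hx
    rcases hx with rfl | rfl | hx
    · rw [hfb]
    · rw [hft]
    · rw [hfR x hx]
  · intro x hx
    simp only [Finset.mem_insert] at hx
    rcases hx with rfl | rfl | hx
    · rw [hfb]
    · rw [hft]
    · rw [hfR x hx]
  · intro x hx y hy hxy hxy'
    simp only [Finset.mem_insert] at hx hy
    rcases hx with rfl | rfl | hx <;> rcases hy with rfl | rfl | hy
    all_goals first
      | exact absurd rfl hxy
      | exact absurd hxy' hPW.symm
      | exact absurd hxy' hQW.symm
      | skip
    · rw [hfb, hfR y hy]; exact (lt_iff_lt_of_outside (hW.tail hy hxy'.symm)).2.symm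
    · rw [hft, hfR y hy]; exact (lt_iff_lt_of_outside (hW.tail hy hxy'.symm)).2
    · rw [hfb, hfR x hx]; exact (lt_iff_lt_of_outside (hP.head hx hxy')).1.symm
    · rw [hft, hfR x hx]; exact (lt_iff_lt_of_outside (hQ.head hx hxy')).1.symm
    · rw [hfR x hx, hfR y hy]
  · intro x hx y hy hxy hxy' hdir
    simp only [Finset.mem_insert] at hx hy
    rcases hx with rfl | rfl | hx <;> rcases hy with rfl | rfl | hy
    all_goals first
      | exact absurd rfl hxy
      | exact absurd hdir hE
      | exact absurd hdir.symm hE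
      | skip
    · rw [hfb, hfR y hy]; exact (lt_iff_lt_of_outside (hW.head hy hxy'.symm)).2.symm
    · rw [hft, hfR y hy]; exact (lt_iff_lt_of_outside (hW.head hy hxy'.symm)).2
    · rw [hfb, hfR x hx]; exact (lt_iff_lt_of_outside (hW.head hx hxy')).1.symm
    · rw [hft, hfR x hx]; exact (lt_iff_lt_of_outside (hW.head hx hxy')).1
    · rw [hfR x hx, hfR y hy]

end Moves

section PairIdentity

variable {I : Finset (Fin n)} {j : Fin n} {R : Finset (GArrow n)} {P Q W : Fin n}
  {p₁ p₂ q₁ q₂ w₁ w₂ : ℚ} {sb st sbt : ℤ}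

theorem lt_iff_of_fork (hE : P < W ↔ Q < W) {p q v v' : ℚ} (hv : v ≠ v')
    (hfk : IsPlanarTreeDiagram I j (insert ⟨P, p, W, v, sbt⟩ (insert ⟨Q, q, W, v', st⟩ R))) :
    (P < Q ↔ P < W) ↔ v' < v := by
  have hPW : P ≠ W := hfk.1.1 ⟨P, p, W, v, sbt⟩ (by simp)
  have hE' := gt_iff_gt_of_lt_iff_lt hE hPW (hfk.1.1 ⟨Q, q, W, v', st⟩ (by simp))
  have hcmp := hfk.2.2.2 ⟨P, p, W, v, sbt⟩ (by simp) ⟨Q, q, W, v', st⟩ (by simp) rfl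
  have hcmp' := hfk.2.2.2 ⟨Q, q, W, v', st⟩ (by simp) ⟨P, p, W, v, sbt⟩ (by simp) rfl
  rcases lt_or_gt_of_ne hPW with hPW | hWP <;> rcases lt_or_gt_of_ne hv with hvv | hvv
  · have := (hcmp hvv P Q .refl .refl).1 hPW (hE.1 hPW)
    exact iff_of_false (fun h => lt_asymm this (h.2 hPW)) (lt_asymm hvv)
  · have := (hcmp' hvv Q P .refl .refl).1 (hE.1 hPW) hPW
    exact iff_of_true (iff_of_true this hPW) hvv
  · have := (hcmp hvv P Q .refl .refl).2 hWP (hE'.1 hWP)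
    exact iff_of_false (fun h => lt_asymm hWP (h.1 this)) (lt_asymm hvv)
  · have := (hcmp' hvv Q P .refl .refl).2 (hE'.1 hWP) hWP
    exact iff_of_true (iff_of_false (lt_asymm this) (lt_asymm hWP)) hvv

theorem directionSign_mul_sign_eq {p q p' w : ℚ} {w₁ w₂ : ℚ} (hsb : sb = 1 ∨ sb = -1)
    (hmix : sb * sbt = if w₁ < w₂ then -1 else 1) :
    directionSign (⟨P, p, Q, q, sb⟩ : GArrow n) * sb =
      (if ((P < Q ↔ P < W) ↔ w₁ < w₂) then -1 else 1) *
        (directionSign (⟨P, p', W, w, sbt⟩ : GArrow n) * sbt) := by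
  unfold directionSign
  rcases hsb with rfl | rfl <;> split_ifs at hmix ⊢ <;> grind

theorem treeWeight_chain_add_fork_of_planar_chain (hj : j ∉ I) (hP : AvoidsSegment R P p₁ p₂)
    (hQ : AvoidsSegment R Q q₁ q₂) (hW : AvoidsSegment R W w₁ w₂) (hw : w₁ ≠ w₂)
    (hsb : sb = 1 ∨ sb = -1) (hmix : sb * sbt = if w₁ < w₂ then -1 else 1)
    (hC : IsPlanarTreeDiagram I j (insert ⟨P, p₁, Q, q₁, sb⟩ (insert ⟨Q, q₂, W, w₁, st⟩ R))) :
    treeWeight I j (insert ⟨P, p₁, Q, q₁, sb⟩ (insert ⟨Q, q₂, W, w₁, st⟩ R)) +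
        treeWeight I j (insert ⟨P, p₂, W, w₂, sbt⟩ (insert ⟨Q, q₂, W, w₁, st⟩ R)) =
      treeWeight I j (insert ⟨P, p₁, W, w₁, sbt⟩ (insert ⟨Q, q₁, W, w₂, st⟩ R)) := by
  have hR := IsRemainder.of_chain hj hP hQ hC
  have hE := lt_root_iff_of_chain hC
  rw [treeWeight_insert_insert (fun h => hR.left_ne_right (congrArg GArrow.tailStr h))
    (hP.not_mem_of_tail rfl rfl) (hQ.symm.not_mem_of_tail rfl rfl) hC]
  by_cases hc : (P < Q ↔ P < W) ↔ w₁ < w₂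
  · have h₁ := isPlanarTreeDiagram_fork_of_chain (sbt := sbt) hj hP hQ hW hC (Or.inr rfl)
      (Or.inr rfl) (Or.inl ⟨rfl, rfl⟩) hc
    have h₂ : ¬ IsPlanarTreeDiagram I j
        (insert ⟨P, p₁, W, w₁, sbt⟩ (insert ⟨Q, q₁, W, w₂, st⟩ R)) := fun h₂ => by
      have hiff : w₁ < w₂ ↔ w₂ < w₁ := hc.symm.trans (lt_iff_of_fork hE hw h₂)
      rcases lt_or_gt_of_ne hw with h | h
      exacts [lt_asymm h (hiff.1 h), lt_asymm h (hiff.2 h)]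
    have hsign := directionSign_mul_sign_eq (P := P) (Q := Q) (W := W) (p := p₁) (q := q₁)
      (p' := p₂) (w := w₂) hsb hmix
    rw [if_pos hc] at hsign
    rw [treeWeight_insert_insert (fun h => hw (congrArg GArrow.headPos h).symm)
      (hP.symm.not_mem_of_tail rfl rfl) (hQ.symm.not_mem_of_tail rfl rfl) h₁,
      treeWeight_of_not_planar h₂]
    linear_combination (directionSign (⟨Q, q₂, W, w₁, st⟩ : GArrow n) * st *
      (treeSign R * ∏ a ∈ R, a.sign)) * hsign
  · have hsig : (P < Q ↔ P < W) ↔ w₂ < w₁ := by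
      rw [hw.symm.le_iff_lt.symm.trans not_lt.symm]
      exact (not_iff_comm.1 (not_iff.1 hc)).symm
    have h₁ : ¬ IsPlanarTreeDiagram I j
        (insert ⟨P, p₂, W, w₂, sbt⟩ (insert ⟨Q, q₂, W, w₁, st⟩ R)) :=
      fun h₁ => hc (lt_iff_of_fork hE hw.symm h₁)
    have h₂ := isPlanarTreeDiagram_fork_of_chain (sbt := sbt) hj hP hQ hW hC (Or.inl rfl)
      (Or.inl rfl) (Or.inr ⟨rfl, rfl⟩) hsig
    have hsign := directionSign_mul_sign_eq (P := P) (Q := Q) (W := W) (p := p₁) (q := q₁)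
      (p' := p₁) (w := w₁) hsb hmix
    rw [if_neg hc] at hsign
    rw [treeWeight_of_not_planar h₁, treeWeight_insert_insert
      (fun h => hw (congrArg GArrow.headPos h)) (hP.not_mem_of_tail rfl rfl)
      (hQ.not_mem_of_tail rfl rfl) h₂]
    simp only [directionSign] at hsign ⊢
    linear_combination ((if Q < W then -1 else 1) * st * (treeSign R * ∏ a ∈ R, a.sign)) * hsign

theorem treeWeight_fork_eq_of_not_planar_chain (hj : j ∉ I) (hP : AvoidsSegment R P p₁ p₂)
    (hQ : AvoidsSegment R Q q₁ q₂) (hW : AvoidsSegment R W w₁ w₂) (hq : q₁ < q₂)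
    (hw : w₁ ≠ w₂)
    (hC : ¬ IsPlanarTreeDiagram I j (insert ⟨P, p₁, Q, q₁, sb⟩ (insert ⟨Q, q₂, W, w₁, st⟩ R))) :
    treeWeight I j (insert ⟨P, p₂, W, w₂, sbt⟩ (insert ⟨Q, q₂, W, w₁, st⟩ R)) =
      treeWeight I j (insert ⟨P, p₁, W, w₁, sbt⟩ (insert ⟨Q, q₁, W, w₂, st⟩ R)) := by
  have hE : ∀ {p q v v'}, (p = p₁ ∨ p = p₂) → (q = q₁ ∨ q = q₂) →
      ((v = w₂ ∧ v' = w₁) ∨ (v = w₁ ∧ v' = w₂)) →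
      IsPlanarTreeDiagram I j (insert ⟨P, p, W, v, sbt⟩ (insert ⟨Q, q, W, v', st⟩ R)) →
      ¬ (P < W ↔ Q < W) := fun hp hq' hv hF hE =>
    hC (isPlanarTreeDiagram_chain_of_fork hj hw hq hP hQ hW hE hp hq' hv hF)
  by_cases h₁ : IsPlanarTreeDiagram I j (insert ⟨P, p₂, W, w₂, sbt⟩ (insert ⟨Q, q₂, W, w₁, st⟩ R))
  · have h₂ := isPlanarTreeDiagram_fork_swap hw.symm hP.symm hQ.symm hW.symm
      (hE (Or.inr rfl) (Or.inr rfl) (Or.inl ⟨rfl, rfl⟩) h₁) h₁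
    rw [treeWeight_insert_insert (fun h => hw (congrArg GArrow.headPos h).symm)
      (hP.symm.not_mem_of_tail rfl rfl) (hQ.symm.not_mem_of_tail rfl rfl) h₁,
      treeWeight_insert_insert (fun h => hw (congrArg GArrow.headPos h))
      (hP.not_mem_of_tail rfl rfl) (hQ.not_mem_of_tail rfl rfl) h₂]
    rfl
  · have h₂ : ¬ IsPlanarTreeDiagram I j
        (insert ⟨P, p₁, W, w₁, sbt⟩ (insert ⟨Q, q₁, W, w₂, st⟩ R)) := fun h₂ =>
      h₁ (isPlanarTreeDiagram_fork_swap hw hP hQ hW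
        (hE (Or.inl rfl) (Or.inl rfl) (Or.inr ⟨rfl, rfl⟩) h₂) h₂)
    rw [treeWeight_of_not_planar h₁, treeWeight_of_not_planar h₂]

theorem treeWeight_chain_add_fork (hj : j ∉ I) (hP : AvoidsSegment R P p₁ p₂)
    (hQ : AvoidsSegment R Q q₁ q₂) (hW : AvoidsSegment R W w₁ w₂) (hq : q₁ < q₂)
    (hw : w₁ ≠ w₂) (hsb : sb = 1 ∨ sb = -1) (hmix : sb * sbt = if w₁ < w₂ then -1 else 1) :
    treeWeight I j (insert ⟨P, p₁, Q, q₁, sb⟩ (insert ⟨Q, q₂, W, w₁, st⟩ R)) +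
        treeWeight I j (insert ⟨P, p₂, W, w₂, sbt⟩ (insert ⟨Q, q₂, W, w₁, st⟩ R)) =
      treeWeight I j (insert ⟨P, p₂, Q, q₂, sb⟩ (insert ⟨Q, q₁, W, w₂, st⟩ R)) +
        treeWeight I j (insert ⟨P, p₁, W, w₁, sbt⟩ (insert ⟨Q, q₁, W, w₂, st⟩ R)) := by
  have hC' : ¬ IsPlanarTreeDiagram I j
      (insert ⟨P, p₂, Q, q₂, sb⟩ (insert ⟨Q, q₁, W, w₂, st⟩ R)) := fun h =>
    lt_asymm hq (h.1.2.2.2.2 ⟨P, p₂, Q, q₂, sb⟩ (by simp) ⟨Q, q₁, W, w₂, st⟩ (by simp) rfl)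
  rw [treeWeight_of_not_planar hC', zero_add]
  by_cases hC : IsPlanarTreeDiagram I j (insert ⟨P, p₁, Q, q₁, sb⟩ (insert ⟨Q, q₂, W, w₁, st⟩ R))
  · exact treeWeight_chain_add_fork_of_planar_chain hj hP hQ hW hw hsb hmix hC
  · rw [treeWeight_of_not_planar hC, zero_add]
    exact treeWeight_fork_eq_of_not_planar_chain hj hP hQ hW hq hw hC

theorem treeWeight_chain_add_fork_of_ne (hj : j ∉ I) (hP : AvoidsSegment R P p₁ p₂)
    (hQ : AvoidsSegment R Q q₁ q₂) (hW : AvoidsSegment R W w₁ w₂) (hq : q₁ ≠ q₂)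
    (hw : w₁ ≠ w₂) (hsb : sb = 1 ∨ sb = -1)
    (hmix : sb * sbt = if (q₁ < q₂ ↔ w₁ < w₂) then -1 else 1) :
    treeWeight I j (insert ⟨P, p₁, Q, q₁, sb⟩ (insert ⟨Q, q₂, W, w₁, st⟩ R)) +
        treeWeight I j (insert ⟨P, p₂, W, w₂, sbt⟩ (insert ⟨Q, q₂, W, w₁, st⟩ R)) =
      treeWeight I j (insert ⟨P, p₂, Q, q₂, sb⟩ (insert ⟨Q, q₁, W, w₂, st⟩ R)) +
        treeWeight I j (insert ⟨P, p₁, W, w₁, sbt⟩ (insert ⟨Q, q₁, W, w₂, st⟩ R)) := by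
  rcases lt_or_gt_of_ne hq with hq | hq
  · simp only [hq, true_iff] at hmix
    exact treeWeight_chain_add_fork hj hP hQ hW hq hw hsb hmix
  · have hw' : w₂ < w₁ ↔ ¬ w₁ < w₂ := ⟨lt_asymm, fun h => lt_of_le_of_ne (not_lt.1 h) hw.symm⟩
    simp only [lt_asymm hq, false_iff, ← hw'] at hmix
    exact (treeWeight_chain_add_fork hj hP.symm hQ.symm hW.symm hq hw.symm hsb hmix).symm

end PairIdentity

section GaussDiagrams

variable {T : Finset (GArrow n)} {P Q W : Fin n} {p₁ p₂ q₁ q₂ w₁ w₂ : ℚ} {sb st sbt : ℤ}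

theorem sum_powerset_insert_insert_insert {α β : Type*} [DecidableEq α] [AddCommMonoid β]
    {a b c : α} {T : Finset α} (ha : a ∉ insert b (insert c T)) (hb : b ∉ insert c T)
    (hc : c ∉ T) (f : Finset α → β) :
    ∑ S ∈ (insert a (insert b (insert c T))).powerset, f S =
      ∑ S ∈ T.powerset, (f S + f (insert c S) + f (insert b S) + f (insert b (insert c S)) +
        f (insert a S) + f (insert a (insert c S)) + f (insert a (insert b S)) +
        f (insert a (insert b (insert c S)))) := by
  simp only [Finset.sum_powerset_insert ha, Finset.sum_powerset_insert hb,
    Finset.sum_powerset_insert hc, ← Finset.sum_add_distrib]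
  exact Finset.sum_congr rfl fun _ _ => by abel

theorem GaussDiagram.ep_ne {G : GaussDiagram n} {x y : GArrow n} (hx : x ∈ G.arrows)
    (hy : y ∈ G.arrows) (hxy : x ≠ y) (s t : Bool) : x.ep s ≠ y.ep t :=
  fun h => hxy (G.endpoints_distinct x hx y hy s t h).1

theorem IsAdjacentPair.symm {G : GaussDiagram n} {s : Fin n} {p q : ℚ}
    (h : IsAdjacentPair G s p q) : IsAdjacentPair G s q p :=
  ⟨h.1.symm, fun c hc e he => by rw [min_comm, max_comm]; exact h.2 c hc e he⟩

theorem GaussDiagram.tailPos_ne_headPos {G : GaussDiagram n} {x y : GArrow n}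
    (hx : x ∈ G.arrows) (hy : y ∈ G.arrows) (hs : x.tailStr = y.headStr) :
    x.tailPos ≠ y.headPos :=
  fun h => Bool.false_ne_true (G.endpoints_distinct x hx y hy false true (Prod.ext hs h)).2

theorem avoidsSegment_of_isAdjacentPair {G : GaussDiagram n} {R : Finset (GArrow n)} {s : Fin n}
    {p q : ℚ} (h : IsAdjacentPair G s p q) (hR : R ⊆ G.arrows)
    (hp : ∀ r ∈ R, ∀ e, r.ep e ≠ (s, p)) (hq : ∀ r ∈ R, ∀ e, r.ep e ≠ (s, q)) :
    AvoidsSegment R s p q := by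
  intro r hr e hs
  have hbetween := h.2 r (hR hr) e hs
  have hne : ∀ {x}, r.ep e ≠ (s, x) → (r.ep e).2 ≠ x := fun hx h' => hx (Prod.ext hs h')
  rcases lt_or_gt_of_ne (hne (hp r hr e)) with h₁ | h₁ <;>
    rcases lt_or_gt_of_ne (hne (hq r hr e)) with h₂ | h₂
  · exact Or.inl ⟨h₁, h₂⟩
  · exact absurd ⟨min_lt_of_right_lt h₂, lt_max_of_lt_left h₁⟩ hbetween
  · exact absurd ⟨min_lt_of_left_lt h₁, lt_max_of_lt_right h₂⟩ hbetween
  · exact Or.inr ⟨h₁, h₂⟩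

theorem sum_treeWeight_triangle {I : Finset (Fin n)} {j : Fin n} (hj : j ∉ I)
    (hP : AvoidsSegment T P p₁ p₂) (hQ : AvoidsSegment T Q q₁ q₂) (hW : AvoidsSegment T W w₁ w₂)
    (hp : p₁ ≠ p₂) (hq : q₁ ≠ q₂) (hw : w₁ ≠ w₂) (hsb : sb = 1 ∨ sb = -1)
    (hmix : sb * sbt = if (q₁ < q₂ ↔ w₁ < w₂) then -1 else 1)
    (hac : (⟨P, p₁, Q, q₁, sb⟩ : GArrow n) ≠ ⟨Q, q₂, W, w₁, st⟩)
    (hac' : (⟨P, p₂, Q, q₂, sb⟩ : GArrow n) ≠ ⟨Q, q₁, W, w₂, st⟩) :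
    ∑ S ∈ (insert ⟨P, p₁, Q, q₁, sb⟩ (insert ⟨P, p₂, W, w₂, sbt⟩
        (insert ⟨Q, q₂, W, w₁, st⟩ T))).powerset, treeWeight I j S =
      ∑ S ∈ (insert ⟨P, p₂, Q, q₂, sb⟩ (insert ⟨P, p₁, W, w₁, sbt⟩
        (insert ⟨Q, q₁, W, w₂, st⟩ T))).powerset, treeWeight I j S := by
  have hab : (⟨P, p₁, Q, q₁, sb⟩ : GArrow n) ≠ ⟨P, p₂, W, w₂, sbt⟩ :=
    fun h => hp (congrArg GArrow.tailPos h)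
  have hbc : (⟨P, p₂, W, w₂, sbt⟩ : GArrow n) ≠ ⟨Q, q₂, W, w₁, st⟩ :=
    fun h => hw (congrArg GArrow.headPos h).symm
  have hab' : (⟨P, p₂, Q, q₂, sb⟩ : GArrow n) ≠ ⟨P, p₁, W, w₁, sbt⟩ :=
    fun h => hp (congrArg GArrow.tailPos h).symm
  have hbc' : (⟨P, p₁, W, w₁, sbt⟩ : GArrow n) ≠ ⟨Q, q₁, W, w₂, st⟩ :=
    fun h => hw (congrArg GArrow.headPos h)
  have haT := hP.not_mem_of_tail (x := ⟨P, p₁, Q, q₁, sb⟩) rfl rfl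
  have hbT := hP.symm.not_mem_of_tail (x := ⟨P, p₂, W, w₂, sbt⟩) rfl rfl
  have hcT := hQ.symm.not_mem_of_tail (x := ⟨Q, q₂, W, w₁, st⟩) rfl rfl
  have haT' := hP.symm.not_mem_of_tail (x := ⟨P, p₂, Q, q₂, sb⟩) rfl rfl
  have hbT' := hP.not_mem_of_tail (x := ⟨P, p₁, W, w₁, sbt⟩) rfl rfl
  have hcT' := hQ.not_mem_of_tail (x := ⟨Q, q₁, W, w₂, st⟩) rfl rfl
  rw [sum_powerset_insert_insert_insert (by simp [hab, hac, haT]) (by simp [hbc, hbT]) hcT,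
    sum_powerset_insert_insert_insert (by simp [hab', hac', haT']) (by simp [hbc', hbT']) hcT']
  refine Finset.sum_congr rfl fun R hR => ?_
  have hRT := Finset.mem_powerset.1 hR
  have hzero : ∀ {x y : GArrow n} {S : Finset (GArrow n)}, x ≠ y → x.tailStr = y.tailStr →
      treeWeight I j (insert x (insert y S)) = 0 :=
    fun hxy h => treeWeight_eq_zero_of_tailStr_eq (by simp) (by simp) hxy h
  have hmove : ∀ {δ δ' : GArrow n}, δ'.tailStr = δ.tailStr → δ'.headStr = δ.headStr →
      δ'.sign = δ.sign → AvoidsSegment T δ.tailStr δ.tailPos δ'.tailPos →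
      AvoidsSegment T δ.headStr δ.headPos δ'.headPos → δ ∉ T → δ' ∉ T →
      treeWeight I j (insert δ R) = treeWeight I j (insert δ' R) :=
    fun ht hh hs hT hH hδ hδ' => treeWeight_insert_eq_of_avoidsSegment ht hh hs (hT.mono hRT)
      (hH.mono hRT) (fun h => hδ (hRT h)) (fun h => hδ' (hRT h))
  have hpair := treeWeight_chain_add_fork_of_ne (I := I) (st := st) hj (hP.mono hRT)
    (hQ.mono hRT) (hW.mono hRT) hq hw hsb hmix
  rw [hzero hab rfl, hzero hab rfl, hzero hab' rfl, hzero hab' rfl,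
    hmove (δ := ⟨P, p₁, Q, q₁, sb⟩) (δ' := ⟨P, p₂, Q, q₂, sb⟩) rfl rfl rfl hP hQ haT haT',
    hmove (δ := ⟨P, p₂, W, w₂, sbt⟩) (δ' := ⟨P, p₁, W, w₁, sbt⟩) rfl rfl rfl hP.symm hW.symm
      hbT hbT',
    hmove (δ := ⟨Q, q₂, W, w₁, st⟩) (δ' := ⟨Q, q₁, W, w₂, st⟩) rfl rfl rfl hQ.symm hW hcT hcT']
  linear_combination hpair

theorem Z_eq_of_triangle {G G' : GaussDiagram n}
    (ha : (⟨P, p₁, Q, q₁, sb⟩ : GArrow n) ∈ G.arrows)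
    (hb : (⟨P, p₂, W, w₂, sbt⟩ : GArrow n) ∈ G.arrows)
    (hc : (⟨Q, q₂, W, w₁, st⟩ : GArrow n) ∈ G.arrows)
    (hP : IsAdjacentPair G P p₁ p₂) (hQ : IsAdjacentPair G Q q₁ q₂)
    (hW : IsAdjacentPair G W w₁ w₂)
    (hmix : sb * sbt = if (q₁ < q₂ ↔ w₁ < w₂) then -1 else 1)
    (hG' : G'.arrows = insert ⟨P, p₂, Q, q₂, sb⟩ (insert ⟨P, p₁, W, w₁, sbt⟩
      (insert ⟨Q, q₁, W, w₂, st⟩ (((G.arrows.erase ⟨P, p₁, Q, q₁, sb⟩).erase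
        ⟨P, p₂, W, w₂, sbt⟩).erase ⟨Q, q₂, W, w₁, st⟩))))
    {I : Finset (Fin n)} {j : Fin n} (hj : j ∉ I) : Z I j G = Z I j G' := by
  set T := ((G.arrows.erase ⟨P, p₁, Q, q₁, sb⟩).erase ⟨P, p₂, W, w₂, sbt⟩).erase
    ⟨Q, q₂, W, w₁, st⟩ with hT
  have hTG : T ⊆ G.arrows := fun r hr => by simp only [hT, Finset.mem_erase] at hr; exact hr.2.2.2
  have hTne : ∀ r ∈ T, r ≠ ⟨P, p₁, Q, q₁, sb⟩ ∧ r ≠ ⟨P, p₂, W, w₂, sbt⟩ ∧ r ≠ ⟨Q, q₂, W, w₁, st⟩ :=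
    fun r hr => by simp only [hT, Finset.mem_erase] at hr; exact ⟨hr.2.2.1, hr.2.1, hr.1⟩
  have hep : ∀ {x : GArrow n}, x ∈ G.arrows → (∀ r ∈ T, r ≠ x) → ∀ e', ∀ r ∈ T, ∀ e,
      r.ep e ≠ x.ep e' := fun hx hxT e' r hr e => GaussDiagram.ep_ne (hTG hr) hx (hxT r hr) e e'
  have hTP : AvoidsSegment T P p₁ p₂ := avoidsSegment_of_isAdjacentPair hP hTG
    (hep ha (fun r hr => (hTne r hr).1) false) (hep hb (fun r hr => (hTne r hr).2.1) false)
  have hTQ : AvoidsSegment T Q q₁ q₂ := avoidsSegment_of_isAdjacentPair hQ hTG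
    (hep ha (fun r hr => (hTne r hr).1) true) (hep hc (fun r hr => (hTne r hr).2.2) false)
  have hTW : AvoidsSegment T W w₁ w₂ := avoidsSegment_of_isAdjacentPair hW hTG
    (hep hc (fun r hr => (hTne r hr).2.2) true) (hep hb (fun r hr => (hTne r hr).2.1) true)
  have hac : (⟨P, p₁, Q, q₁, sb⟩ : GArrow n) ≠ ⟨Q, q₂, W, w₁, st⟩ := fun h =>
    GaussDiagram.tailPos_ne_headPos (G := G') (x := ⟨Q, q₁, W, w₂, st⟩) (y := ⟨P, p₁, W, w₁, sbt⟩)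
      (by simp [hG']) (by simp [hG']) (congrArg GArrow.headStr h) (congrArg GArrow.headPos h)
  have hac' : (⟨P, p₂, Q, q₂, sb⟩ : GArrow n) ≠ ⟨Q, q₁, W, w₂, st⟩ := fun h =>
    GaussDiagram.tailPos_ne_headPos hc hb (congrArg GArrow.headStr h) (congrArg GArrow.headPos h)
  have hGT : G.arrows = insert ⟨P, p₁, Q, q₁, sb⟩ (insert ⟨P, p₂, W, w₂, sbt⟩
      (insert ⟨Q, q₂, W, w₁, st⟩ T)) := by
    have hba : (⟨P, p₂, W, w₂, sbt⟩ : GArrow n) ≠ ⟨P, p₁, Q, q₁, sb⟩ :=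
      fun h => hP.1 (congrArg GArrow.tailPos h).symm
    have hcb : (⟨Q, q₂, W, w₁, st⟩ : GArrow n) ≠ ⟨P, p₂, W, w₂, sbt⟩ :=
      fun h => hW.1 (congrArg GArrow.headPos h)
    rw [hT, Finset.insert_erase (Finset.mem_erase.2 ⟨hcb, Finset.mem_erase.2 ⟨hac.symm, hc⟩⟩),
      Finset.insert_erase (Finset.mem_erase.2 ⟨hba, hb⟩), Finset.insert_erase ha]
  have hsb : sb = 1 ∨ sb = -1 := G.sign_pm _ ha
  rw [Z_eq_sum_treeWeight, Z_eq_sum_treeWeight, hG', hGT]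
  exact sum_treeWeight_triangle hj hTP hTQ hTW hP.1 hQ.1 hW.1 hsb hmix hac hac'

end GaussDiagrams

end

/-- **Invariance under the third Reidemeister move.**  If `G` and `G'` are
Gauss diagrams on `n` strings related by a third Reidemeister move `Ω3`
(simultaneous transposition of the two adjacent endpoints on each of three
string fragments carrying the six endpoints of three arrows joining the
fragments pairwise, preserving directions and signs, in a configuration arising
from the oriented third Reidemeister move on tangle diagrams), then
`Z_{I,j}(G) = Z_{I,j}(G')` for every `I ⊆ {1,…,n}` and every `j ∉ I`. -/
theorem omega3_invariance {n : ℕ} (G G' : GaussDiagram n)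
    (h : Omega3Rel G G') :
    ∀ (I : Finset (Fin n)) (j : Fin n), j ∉ I → Z I j G = Z I j G' := by
  obtain ⟨sX, sY, sZ, xa, xb, ya, yc, zb, zc, u, w, ox, oy, oz, hA, hB, hC, hox, hoy, hoz,
    adjX, adjY, adjZ, hG'⟩ := h
  intro I j hj
  -- relabel the three fragments so that the arrows run `P → Q`, `P → W` and `Q → W`
  cases u <;> cases w <;>
    simp only [mkDirArrow, Bool.false_eq_true, if_false, if_true] at hA hB hC hG' <;>
    [refine Z_eq_of_triangle hC hB hA adjZ.symm adjY.symm adjX ?_ ?_ hj;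
      refine Z_eq_of_triangle hC hA hB adjY.symm adjZ.symm adjX.symm ?_ ?_ hj;
      refine Z_eq_of_triangle hB hA hC adjX.symm adjZ adjY.symm ?_ ?_ hj;
      refine Z_eq_of_triangle hA hB hC adjX adjY adjZ.symm ?_ ?_ hj]
  all_goals first
    | rw [hG']; ext
      simp only [Finset.mem_union, Finset.mem_insert, Finset.mem_singleton, Finset.mem_erase]
      tauto
    | cases ox <;> cases oy <;> cases oz <;> grind [bsign]
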